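/- arXiv:1009.1866 — 4 statements merged into one kernel-verified Lean document; each statement's English description precedes it below -/
import Mathlib

section
/- Let P be a convex polygon and let α be the smallest interior angle of P. Then the aspect ratio of P is at least 2/α. -/
/-!
At a vertex `x` of smallest angle `α` both edges lie in the frontier of `P`, so each lies on a
supporting line of `P`. Hence `P` lies in the angular sector with apex `x` spanned by the two
edges, and also in the disc of radius `diam P` about `x`. After moving the plane isometrically
onto `ℂ`, polar coordinates show that this part of the disc has area `α · diam(P)² / 2`. The area
of `P` is positive because no three vertices of `P` are collinear.
-/

open MeasureTheory Real

/-- The aspect ratio of a planar convex region: `diam(A)^2 / area(A)`. -/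
noncomputable def aspectRatio (A : Set (EuclideanSpace ℝ (Fin 2))) : ℝ :=
  (Metric.diam A) ^ 2 / (volume A).toReal

open Set InnerProductGeometry
open scoped EuclideanGeometry

-- For `0 ≤ θ < π`: the points of the closed disc of radius `d` with argument in `[0, θ]`.
def sector (θ d : ℝ) : Set ℂ :=
  {z | 0 ≤ z.im ∧ z.im * cos θ ≤ z.re * sin θ ∧ ‖z‖ ≤ d}

theorem isClosed_sector (θ d : ℝ) : IsClosed (sector θ d) :=
  (isClosed_le continuous_const Complex.continuous_im).inter
    ((isClosed_le (Complex.continuous_im.mul continuous_const)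
      (Complex.continuous_re.mul continuous_const)).inter
      (isClosed_le continuous_norm continuous_const))

theorem polarCoord_symm_mem_sector_iff {θ d r φ : ℝ} (hθ : 0 ≤ θ) (hθπ : θ < π) (hr : 0 < r)
    (hφ : φ ∈ Ioo (-π) π) :
    Complex.polarCoord.symm (r, φ) ∈ sector θ d ↔ (r, φ) ∈ Ioc 0 d ×ˢ Icc 0 θ := by
  have hre : (Complex.polarCoord.symm (r, φ)).re = r * cos φ := by
    simp [Complex.cos_ofReal_re, Complex.sin_ofReal_re]
  have him : (Complex.polarCoord.symm (r, φ)).im = r * sin φ := by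
    simp [Complex.cos_ofReal_re, Complex.sin_ofReal_re]
  -- `im * cos θ ≤ re * sin θ` says `sin (φ - θ) ≤ 0`
  have hsub : r * sin φ * cos θ - r * cos φ * sin θ = r * sin (φ - θ) := by
    rw [sin_sub]; ring
  simp only [sector, mem_ofPred_eq, hre, him, Complex.norm_polarCoord_symm, abs_of_pos hr,
    mem_prod, mem_Ioc, mem_Icc, hr, true_and]
  constructor
  · rintro ⟨hsin, hcos, hrd⟩
    refine ⟨hrd, ?_, ?_⟩
    · by_contra! h
      nlinarith [sin_neg_of_neg_of_neg_pi_lt h hφ.1]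
    · by_contra! h
      nlinarith [sin_pos_of_pos_of_lt_pi (sub_pos.2 h) (by linarith [hφ.2] : φ - θ < π)]
  · rintro ⟨hrd, hφ0, hφθ⟩
    have : sin (φ - θ) ≤ 0 := sin_nonpos_of_nonpos_of_neg_pi_le (by linarith) (by linarith)
    exact ⟨mul_nonneg hr.le (sin_nonneg_of_nonneg_of_le_pi hφ0 (by linarith)),
      by nlinarith, hrd⟩

theorem volume_sector {θ d : ℝ} (hθ : 0 ≤ θ) (hθπ : θ < π) (hd : 0 ≤ d) :
    volume (sector θ d) = ENNReal.ofReal (θ * d ^ 2 / 2) := by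
  set T : Set (ℝ × ℝ) := Ioc 0 d ×ˢ Icc 0 θ
  have hT : T ⊆ polarCoord.target := by
    rw [polarCoord_target]
    exact prod_mono Ioc_subset_Ioi_self fun φ hφ ↦ ⟨by linarith [hφ.1, pi_pos], by linarith [hφ.2]⟩
  have hindicator :
      EqOn (fun p : ℝ × ℝ ↦ p.1 • (sector θ d).indicator 1 (Complex.polarCoord.symm p))
        (T.indicator Prod.fst) polarCoord.target := by
    rintro ⟨r, φ⟩ ⟨hr, hφ⟩
    dsimp only at hr hφ ⊢
    have hiff := polarCoord_symm_mem_sector_iff (d := d) hθ hθπ hr hφ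
    by_cases h : (r, φ) ∈ T
    · rw [indicator_of_mem h, indicator_of_mem (hiff.2 h), Pi.one_apply, smul_eq_mul, mul_one]
    · rw [indicator_of_notMem h, indicator_of_notMem (mt hiff.1 h), smul_zero]
  have hfin : volume (sector θ d) ≠ ⊤ :=
    ((Metric.isBounded_closedBall (x := (0 : ℂ)) (r := d)).subset
      fun z hz ↦ by simpa using hz.2.2).measure_lt_top.ne
  have hreal : volume.real (sector θ d) = θ * d ^ 2 / 2 := by
    rw [← integral_indicator_one (isClosed_sector θ d).measurableSet,
      ← Complex.integral_comp_polarCoord_symm,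
      setIntegral_congr_fun polarCoord.open_target.measurableSet hindicator,
      setIntegral_indicator (measurableSet_Ioc.prod measurableSet_Icc),
      inter_eq_self_of_subset_right hT, Measure.volume_eq_prod, ← Measure.prod_restrict,
      integral_fun_fst (fun r : ℝ ↦ r), ← intervalIntegral.integral_of_le hd, integral_id]
    simp [hθ]
    ring
  rw [← ENNReal.ofReal_toReal hfin, ← measureReal_def, hreal]

theorem Complex.exists_linearIsometryEquiv_eq {w₁ w₂ : ℂ} (hw₁ : w₁ ≠ 0) (hw₂ : w₂ ≠ 0) :
    ∃ e : ℂ ≃ₗᵢ[ℝ] ℂ, e w₁ = ‖w₁‖ ∧ e w₂ = ‖w₂‖ * exp (angle w₁ w₂ * I) := by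
  set q := w₂ / w₁
  have hangle : angle w₁ w₂ = |q.arg| := by rw [angle_comm, angle_eq_abs_arg hw₂ hw₁]
  set ρ := rotation (Circle.exp (-w₁.arg))
  have hρ₁ : ρ w₁ = ‖w₁‖ := by
    conv_lhs => rw [← norm_mul_exp_arg_mul_I w₁]
    rw [rotation_apply, Circle.coe_exp, mul_left_comm, ← exp_add]
    simp
  have hρ₂ : ρ w₂ = ‖w₂‖ * exp (q.arg * I) := by
    have hw : w₂ = q * w₁ := (div_mul_cancel₀ w₂ hw₁).symm
    conv_lhs => rw [hw, rotation_apply, mul_left_comm, ← rotation_apply, hρ₁,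
      ← norm_mul_exp_arg_mul_I q]
    rw [hw, norm_mul, ofReal_mul]
    ring
  rcases le_total 0 q.arg with h | h
  · exact ⟨ρ, hρ₁, by rw [hρ₂, hangle, abs_of_nonneg h]⟩
  · refine ⟨ρ.trans conjLIE, by simp [hρ₁], ?_⟩
    simp [hρ₂, hangle, abs_of_nonpos h, ← exp_conj]

theorem exists_linearIsometryEquiv_complex_eq {u₁ u₂ : EuclideanSpace ℝ (Fin 2)} (hu₁ : u₁ ≠ 0)
    (hu₂ : u₂ ≠ 0) :
    ∃ e : EuclideanSpace ℝ (Fin 2) ≃ₗᵢ[ℝ] ℂ, e u₁ = ‖u₁‖ ∧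
      e u₂ = ‖u₂‖ * Complex.exp (angle u₁ u₂ * Complex.I) := by
  set h := Complex.orthonormalBasisOneI.repr.symm
  obtain ⟨e, he₁, he₂⟩ :=
    Complex.exists_linearIsometryEquiv_eq (w₁ := h u₁) (w₂ := h u₂) (by simpa) (by simpa)
  refine ⟨h.trans e, ?_, ?_⟩
  · rw [LinearIsometryEquiv.trans_apply, he₁, h.norm_map]
  · rw [LinearIsometryEquiv.trans_apply, he₂, h.norm_map, ← h.coe_toLinearIsometry,
      h.toLinearIsometry.angle_map]

def cone {E : Type*} [AddCommGroup E] [Module ℝ E] (u₁ u₂ : E) : Set E :=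
  {z | ∃ a b : ℝ, 0 ≤ a ∧ 0 ≤ b ∧ a • u₁ + b • u₂ = z}

theorem cone_inter_closedBall_subset_sector {r₁ r₂ θ d : ℝ} (hr₁ : 0 ≤ r₁) (hr₂ : 0 ≤ r₂)
    (hθ : 0 ≤ sin θ) :
    cone (r₁ : ℂ) (r₂ * Complex.exp (θ * Complex.I)) ∩ Metric.closedBall 0 d ⊆ sector θ d := by
  rintro _ ⟨⟨a, b, ha, hb, rfl⟩, hz⟩
  refine ⟨?_, ?_, by simpa using hz⟩ <;>
    simp only [Complex.add_im, Complex.add_re, Complex.real_smul, Complex.mul_im, Complex.mul_re,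
      Complex.ofReal_re, Complex.ofReal_im, Complex.exp_ofReal_mul_I_re,
      Complex.exp_ofReal_mul_I_im]
  · simp only [zero_mul, add_zero]
    positivity
  · nlinarith [mul_nonneg (mul_nonneg ha hr₁) hθ]

theorem volume_cone_inter_closedBall_le {u₁ u₂ : EuclideanSpace ℝ (Fin 2)} (hu₁ : u₁ ≠ 0)
    (hu₂ : u₂ ≠ 0) (hπ : angle u₁ u₂ < π) {d : ℝ} (hd : 0 ≤ d) :
    volume (cone u₁ u₂ ∩ Metric.closedBall 0 d) ≤ ENNReal.ofReal (angle u₁ u₂ * d ^ 2 / 2) := by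
  obtain ⟨e, he₁, he₂⟩ := exists_linearIsometryEquiv_complex_eq hu₁ hu₂
  have hsub : cone u₁ u₂ ∩ Metric.closedBall 0 d ⊆ e ⁻¹' sector (angle u₁ u₂) d := by
    rintro _ ⟨⟨a, b, ha, hb, rfl⟩, hz⟩
    refine cone_inter_closedBall_subset_sector (norm_nonneg u₁) (norm_nonneg u₂)
      (sin_nonneg_of_nonneg_of_le_pi (angle_nonneg _ _) (angle_le_pi _ _))
      ⟨⟨a, b, ha, hb, by simp [he₁, he₂]⟩, by
        rw [Metric.mem_closedBall, dist_zero_right, e.norm_map]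
        simpa using hz⟩
  calc volume (cone u₁ u₂ ∩ Metric.closedBall 0 d)
      ≤ volume (e ⁻¹' sector (angle u₁ u₂) d) := measure_mono hsub
    _ = volume (sector (angle u₁ u₂) d) :=
      e.measurePreserving.measure_preimage (isClosed_sector _ _).measurableSet.nullMeasurableSet
    _ = ENNReal.ofReal (angle u₁ u₂ * d ^ 2 / 2) := volume_sector (angle_nonneg _ _) hπ hd

section ConvexGeometry

variable {E : Type*} [NormedAddCommGroup E] [NormedSpace ℝ E] {P : Set E}

theorem Convex.exists_forall_le_of_segment_subset_frontier (hP : Convex ℝ P)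
    (hint : (interior P).Nonempty) {x y : E} (hxy : segment ℝ x y ⊆ frontier P) :
    ∃ f : E →L[ℝ] ℝ, (∀ p ∈ closure P, f p ≤ f x) ∧ f y = f x ∧ ∀ w ∈ interior P, f w < f x := by
  obtain ⟨f, hf⟩ := geometric_hahn_banach_open_point hP.interior isOpen_interior
    (hxy (midpoint_mem_segment x y)).2
  have hle : ∀ p ∈ closure P, f p ≤ f (midpoint ℝ x y) := by
    rw [← hP.closure_interior_eq_closure_of_nonempty_interior hint]
    exact closure_minimal (fun p hp ↦ (hf p hp).le) (isClosed_le f.continuous continuous_const)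
  have hx := hle x (frontier_subset_closure (hxy (left_mem_segment ℝ x y)))
  have hy := hle y (frontier_subset_closure (hxy (right_mem_segment ℝ x y)))
  have hmid : f (midpoint ℝ x y) = (f x + f y) / 2 := by
    rw [midpoint_eq_smul_add, map_smul, map_add, smul_eq_mul, invOf_eq_inv]
    ring
  exact ⟨f, fun p hp ↦ (hle p hp).trans (by linarith), by linarith,
    fun w hw ↦ (hf w hw).trans_le (by linarith)⟩

theorem nonneg_of_apply_smul_add_smul_nonpos {f : E →L[ℝ] ℝ} {u v : E} (hu : f u = 0)
    (hv : f v ≤ 0) {a₀ b₀ a b : ℝ} (hw : f (a₀ • u + b₀ • v) < 0) (hz : f (a • u + b • v) ≤ 0) :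
    0 ≤ b := by
  simp only [map_add, map_smul, hu, smul_eq_mul, mul_zero, zero_add] at hw hz
  have hv' : f v < 0 := hv.lt_of_ne fun h ↦ by simp [h] at hw
  exact nonneg_of_mul_nonpos_left hz hv'

theorem Convex.sub_mem_cone_of_segment_subset_frontier (hP : Convex ℝ P)
    (hint : (interior P).Nonempty) {x y₁ y₂ : E} (h₁ : segment ℝ x y₁ ⊆ frontier P)
    (h₂ : segment ℝ x y₂ ⊆ frontier P) (hspan : Submodule.span ℝ {y₁ - x, y₂ - x} = ⊤)
    {p : E} (hp : p ∈ P) : p - x ∈ cone (y₁ - x) (y₂ - x) := by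
  obtain ⟨f₁, hf₁P, hf₁y, hf₁int⟩ := hP.exists_forall_le_of_segment_subset_frontier hint h₁
  obtain ⟨f₂, hf₂P, hf₂y, hf₂int⟩ := hP.exists_forall_le_of_segment_subset_frontier hint h₂
  have hcoord (z : E) : ∃ a b : ℝ, a • (y₁ - x) + b • (y₂ - x) = z :=
    Submodule.mem_span_pair.1 (hspan ▸ Submodule.mem_top)
  have hle (f : E →L[ℝ] ℝ) (hf : ∀ q ∈ closure P, f q ≤ f x) {q : E} (hq : q ∈ closure P) :
      f (q - x) ≤ 0 := by
    rw [map_sub, sub_nonpos]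
    exact hf q hq
  have hzero (f : E →L[ℝ] ℝ) {y : E} (hy : f y = f x) : f (y - x) = 0 := by
    rw [map_sub, hy, sub_self]
  have hy₁ : y₁ ∈ closure P := frontier_subset_closure (h₁ (right_mem_segment ℝ x y₁))
  have hy₂ : y₂ ∈ closure P := frontier_subset_closure (h₂ (right_mem_segment ℝ x y₂))
  obtain ⟨w, hw⟩ := hint
  have hf₁w : f₁ (w - x) < 0 := by rw [map_sub, sub_neg]; exact hf₁int w hw
  have hf₂w : f₂ (w - x) < 0 := by rw [map_sub, sub_neg]; exact hf₂int w hw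
  have hf₁p := hle f₁ hf₁P (subset_closure hp)
  have hf₂p := hle f₂ hf₂P (subset_closure hp)
  obtain ⟨a₀, b₀, hw₀⟩ := hcoord (w - x)
  obtain ⟨a, b, hab⟩ := hcoord (p - x)
  rw [← hw₀] at hf₁w hf₂w
  rw [← hab] at hf₁p hf₂p
  rw [add_comm] at hf₂w hf₂p
  exact ⟨a, b, nonneg_of_apply_smul_add_smul_nonpos (hzero f₂ hf₂y) (hle f₂ hf₂P hy₁) hf₂w hf₂p,
    nonneg_of_apply_smul_add_smul_nonpos (hzero f₁ hf₁y) (hle f₁ hf₁P hy₂) hf₁w hf₁p, hab⟩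

end ConvexGeometry

theorem InnerProductGeometry.span_pair_eq_top {V : Type*} [NormedAddCommGroup V]
    [InnerProductSpace ℝ V] (hV : Module.finrank ℝ V = 2) {x y : V} (hx : x ≠ 0) (hy : y ≠ 0)
    (h0 : 0 < angle x y) (hπ : angle x y < π) : Submodule.span ℝ {x, y} = ⊤ := by
  have hli : LinearIndependent ℝ ![x, y] := by
    refine linearIndependent_fin2.2 ⟨hy, fun a ha ↦ ?_⟩
    simp only [Matrix.cons_val_one, Matrix.cons_val_zero] at ha
    subst ha
    rcases lt_trichotomy a 0 with ha | rfl | ha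
    · rw [angle_smul_left_of_neg _ _ ha, angle_neg_self_of_nonzero hy] at hπ
      exact hπ.false
    · exact hx (zero_smul ℝ y)
    · rw [angle_smul_left_of_pos _ _ ha, angle_self hy] at h0
      exact h0.false
  have := hli.span_eq_top_of_card_eq_finrank (by simp [hV])
  rwa [Matrix.range_cons, Matrix.range_cons, Matrix.range_empty, union_empty,
    singleton_union] at this

section Vertices

variable {ι : Type*} {E : Type*} [AddCommGroup E] [Module ℝ E] {v : ι → E}

theorem mem_convexHull_image_ne_of_wbtw {i j k : ι} (h : Wbtw ℝ (v j) (v i) (v k)) (hj : j ≠ i)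
    (hk : k ≠ i) : v i ∈ convexHull ℝ (v '' {l | l ≠ i}) :=
  convexHull_mono (pair_subset (mem_image_of_mem v hj) (mem_image_of_mem v hk))
    (by rw [convexHull_pair]; exact h.mem_segment)

theorem not_collinear_of_forall_notMem_convexHull (hv : ∀ i, v i ∉ convexHull ℝ (v '' {j | j ≠ i}))
    {a b c : ι} (hab : a ≠ b) (hac : a ≠ c) (hbc : b ≠ c) : ¬Collinear ℝ {v a, v b, v c} := by
  intro h
  rcases h.wbtw_or_wbtw_or_wbtw with h | h | h
  · exact hv b (mem_convexHull_image_ne_of_wbtw h hab hbc.symm)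
  · exact hv c (mem_convexHull_image_ne_of_wbtw h hbc hac)
  · exact hv a (mem_convexHull_image_ne_of_wbtw h hac.symm hab.symm)

end Vertices

theorem EuclideanGeometry.angle_lt_pi_of_forall_notMem_convexHull {ι V : Type*}
    [NormedAddCommGroup V] [InnerProductSpace ℝ V] {v : ι → V}
    (hv : ∀ i, v i ∉ convexHull ℝ (v '' {j | j ≠ i})) {i j k : ι} (hj : j ≠ i) (hk : k ≠ i) :
    angle (v j) (v i) (v k) < π :=
  (angle_le_pi _ _ _).lt_of_ne fun h ↦
    hv i (mem_convexHull_image_ne_of_wbtw (angle_eq_pi_iff_sbtw.1 h).wbtw hj hk)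

theorem affineSpan_eq_top_of_not_collinear {E : Type*} [NormedAddCommGroup E] [NormedSpace ℝ E]
    [FiniteDimensional ℝ E] (hE : Module.finrank ℝ E = 2) {s : Set E} (h : ¬Collinear ℝ s) :
    affineSpan ℝ s = ⊤ := by
  have hs : s.Nonempty := nonempty_iff_ne_empty.2 fun hs ↦ h (hs ▸ collinear_empty ℝ E)
  rw [AffineSubspace.affineSpan_eq_top_iff_vectorSpan_eq_top_of_nonempty ℝ E E hs]
  apply Submodule.eq_top_of_finrank_eq
  have := Submodule.finrank_le (vectorSpan ℝ s)
  rw [collinear_iff_finrank_le_one] at h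
  omega

theorem interior_convexHull_range_nonempty {ι E : Type*} [Fintype ι] [NormedAddCommGroup E]
    [NormedSpace ℝ E] [FiniteDimensional ℝ E] (hE : Module.finrank ℝ E = 2) {v : ι → E}
    (hv : ∀ i, v i ∉ convexHull ℝ (v '' {j | j ≠ i})) (hι : 2 < Fintype.card ι) :
    (interior (convexHull ℝ (range v))).Nonempty := by
  obtain ⟨a, b, c, hab, hac, hbc⟩ := Fintype.two_lt_card_iff.1 hι
  rw [(convex_convexHull ℝ _).interior_nonempty_iff_affineSpan_eq_top, affineSpan_convexHull]
  refine affineSpan_eq_top_of_not_collinear hE fun h ↦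
    not_collinear_of_forall_notMem_convexHull hv hab hac hbc (h.subset ?_)
  simp [insert_subset_iff]

theorem Convex.volume_le_angle_mul_diam_sq {P : Set (EuclideanSpace ℝ (Fin 2))} (hP : Convex ℝ P)
    (hint : (interior P).Nonempty) (hbdd : Bornology.IsBounded P)
    {x y₁ y₂ : EuclideanSpace ℝ (Fin 2)} (hx : x ∈ P) (h₁ : segment ℝ x y₁ ⊆ frontier P)
    (h₂ : segment ℝ x y₂ ⊆ frontier P) (hy₁ : y₁ ≠ x) (hy₂ : y₂ ≠ x) (h0 : 0 < ∠ y₁ x y₂)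
    (hπ : ∠ y₁ x y₂ < π) :
    volume P ≤ ENNReal.ofReal (∠ y₁ x y₂ * Metric.diam P ^ 2 / 2) := by
  have hu₁ : y₁ - x ≠ 0 := sub_ne_zero.2 hy₁
  have hu₂ : y₂ - x ≠ 0 := sub_ne_zero.2 hy₂
  set K := cone (y₁ - x) (y₂ - x) ∩ Metric.closedBall 0 (Metric.diam P)
  have hsub : P ⊆ (· - x) ⁻¹' K := fun p hp ↦
    ⟨hP.sub_mem_cone_of_segment_subset_frontier hint h₁ h₂
      (span_pair_eq_top finrank_euclideanSpace_fin hu₁ hu₂ h0 hπ) hp, by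
        rw [mem_closedBall_zero_iff, ← dist_eq_norm]
        exact Metric.dist_le_diam_of_mem hbdd hp hx⟩
  calc volume P ≤ volume ((· - x) ⁻¹' K) := measure_mono hsub
    _ = volume K := by
      simp_rw [sub_eq_add_neg]
      exact measure_preimage_add_right _ _ _
    _ ≤ _ := volume_cone_inter_closedBall_le hu₁ hu₂ hπ Metric.diam_nonneg

theorem aspectRatio_nonneg (A : Set (EuclideanSpace ℝ (Fin 2))) : 0 ≤ aspectRatio A :=
  div_nonneg (sq_nonneg _) ENNReal.toReal_nonneg

theorem two_div_le_aspectRatio {A : Set (EuclideanSpace ℝ (Fin 2))} (hA : (interior A).Nonempty)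
    {α : ℝ} (hα : 0 < α) (hvol : volume A ≤ ENNReal.ofReal (α * Metric.diam A ^ 2 / 2)) :
    2 / α ≤ aspectRatio A := by
  have hpos : 0 < (volume A).toReal := ENNReal.toReal_pos
    (Measure.measure_pos_of_nonempty_interior _ hA).ne' (hvol.trans_lt ENNReal.ofReal_lt_top).ne
  have hle : (volume A).toReal ≤ α * Metric.diam A ^ 2 / 2 :=
    ENNReal.toReal_le_of_le_ofReal (by positivity) hvol
  rw [aspectRatio, div_le_div_iff₀ hα hpos]
  linarith

/-- Let `P` be a convex polygon with vertices `v 0, …, v (n-1)` (listed in cyclic boundary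
order, each a genuine vertex), `n ≥ 3`, and let `α` be the smallest interior angle of `P`.
Then the aspect ratio of `P` is at least `2/α`. -/
theorem stmt0 (n : ℕ) [NeZero n] (hn : 3 ≤ n)
    (v : Fin n → EuclideanSpace ℝ (Fin 2)) (hinj : Function.Injective v)
    (P : Set (EuclideanSpace ℝ (Fin 2)))
    (hP : P = convexHull ℝ (Set.range v))
    (hvert : ∀ i, v i ∉ convexHull ℝ (v '' {j | j ≠ i}))
    (hcyc : ∀ i, segment ℝ (v i) (v (i + 1)) ⊆ frontier P)
    (α : ℝ)
    (hα : α = ⨅ i : Fin n, EuclideanGeometry.angle (v (i - 1)) (v i) (v (i + 1))) :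
    2 / α ≤ aspectRatio P := by
  rcases le_or_gt α 0 with hα0 | hα0
  · exact (div_nonpos_of_nonneg_of_nonpos zero_le_two hα0).trans (aspectRatio_nonneg P)
  have hne (i : Fin n) : i - 1 ≠ i ∧ i + 1 ≠ i := by
    have h1 : (1 : Fin n) ≠ 0 := by rw [Ne, Fin.one_eq_zero_iff]; omega
    exact ⟨by simpa [sub_eq_self] using h1, by simpa [add_eq_left] using h1⟩
  obtain ⟨i, hi⟩ := exists_eq_ciInf_of_finite
    (f := fun i : Fin n ↦ ∠ (v (i - 1)) (v i) (v (i + 1)))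
  rw [← hα] at hi
  have hπ : α < π :=
    hi ▸ EuclideanGeometry.angle_lt_pi_of_forall_notMem_convexHull hvert (hne i).1 (hne i).2
  have hint : (interior P).Nonempty :=
    hP ▸ interior_convexHull_range_nonempty finrank_euclideanSpace_fin hvert (by simp; omega)
  have hbdd : Bornology.IsBounded P :=
    hP ▸ ((finite_range v).isCompact_convexHull (𝕜 := ℝ)).isBounded
  have hedge : segment ℝ (v i) (v (i - 1)) ⊆ frontier P := by
    simpa [segment_symm] using hcyc (i - 1)
  have hconv : Convex ℝ P := hP ▸ convex_convexHull ℝ _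
  have hvi : v i ∈ P := hP ▸ subset_convexHull ℝ _ (mem_range_self i)
  have hvol := hconv.volume_le_angle_mul_diam_sq hint hbdd hvi hedge (hcyc i)
    (hinj.ne (hne i).1) (hinj.ne (hne i).2) (hi ▸ hα0) (hi ▸ hπ)
  exact two_div_le_aspectRatio hint hα0 (hi ▸ hvol)
end

section
/- Any rooted tree T with n nodes can be transformed into a binary tree T' (every internal node has at most two children) whose leaves are exactly the leaves of T, such that two original nodes of T are in ancestor–descendant relation in T' if and only if they are in that relation in T, and depth(T') ≤ 2·(depth(T) + log₂ n). -/
/-- A rooted tree on a finite vertex type, given by its parent function. -/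
structure FRTree (V : Type) [Fintype V] [DecidableEq V] where
  root : V
  parent : V → V
  root_fixed : parent root = root
  reaches : ∀ v : V, ∃ k : ℕ, parent^[k] v = root

variable {V : Type} [Fintype V] [DecidableEq V]

/-- The depth of a node: the number of edges on the path to the root. -/
noncomputable def frNodeDepth (T : FRTree V) (v : V) : ℕ :=
  Nat.find (T.reaches v)

/-- The depth of a rooted tree: the maximum number of edges on a root-to-leaf path. -/
noncomputable def frDepth (T : FRTree V) : ℕ :=
  Finset.univ.sup (frNodeDepth T)

/-- `u` is an frAncestor of `v` (possibly `u = v`). -/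
def frAncestor (T : FRTree V) (u v : V) : Prop :=
  ∃ k : ℕ, T.parent^[k] v = u

/-- A node is a leaf if it has no frChildren. -/
def frIsLeaf (T : FRTree V) (v : V) : Prop :=
  ∀ u, T.parent u = v → u = v

/-- The frChildren of a node. -/
def frChildren (T : FRTree V) (v : V) : Finset V :=
  Finset.univ.filter fun u => T.parent u = v ∧ u ≠ v

/-!
Give every node `v` of `T` a binary code: the root gets `[]`, and a child `c` of `p` gets the
code of `p` followed by a word `γ_p(c)`, where the words `γ_p(c)` of the children of `p` are
nonempty and prefix-free. They are built recursively: the child with the largest subtree gets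
`0`, and the remaining children are split into two groups of total subtree size at most
`(|T_p| - 1) / 2` each, coded recursively behind `10` and `11`. Hence
`|T_c| · 2 ^ ⌊|γ_p(c)| / 2⌋ ≤ |T_p|`, and telescoping along a root path bounds the length of a
code by `depth(v) + 2 log₂ n`. The binary tree `T'` is the trie of all prefixes of the codes:
the prefix order on codes is the ancestor order of `T`, and the maximal codes are exactly the
codes of the leaves.
-/

section WeightBalancedCode

variable {α : Type*}

def IsWeightBalancedCode (w : α → ℕ) (M : ℕ) (s : Finset α) (γ : α → List Bool) : Prop :=
  ∀ a ∈ s, γ a ≠ [] ∧ (∀ b ∈ s, γ a <+: γ b → a = b) ∧ w a * 2 ^ ((γ a).length / 2) ≤ M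

theorem IsWeightBalancedCode.insert_union [DecidableEq α] {w : α → ℕ} {M : ℕ} {A B : Finset α}
    {γA γB : α → List Bool} (hA : IsWeightBalancedCode w (M / 2) A γA)
    (hB : IsWeightBalancedCode w (M / 2) B γB) {x : α} (hx : w x ≤ M) :
    IsWeightBalancedCode w M (insert x (A ∪ B)) fun a =>
      if a = x then [false] else if a ∈ A then true :: false :: γA a else true :: true :: γB a := by
  have weight_le {a : α} {l : List Bool} (b : Bool) (h : w a * 2 ^ (l.length / 2) ≤ M / 2) :
      w a * 2 ^ ((true :: b :: l).length / 2) ≤ M := by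
    rw [show (true :: b :: l).length = l.length + 2 from rfl, Nat.add_div_right _ two_pos,
      pow_succ, ← mul_assoc]
    omega
  intro a ha
  simp only [Finset.mem_insert, Finset.mem_union] at ha
  beta_reduce
  refine ⟨by split_ifs <;> simp, fun b hb hab => ?_, ?_⟩
  · simp only [Finset.mem_insert, Finset.mem_union] at hb
    beta_reduce at hab
    split_ifs at hab <;>
      simp only [List.cons_prefix_cons, List.prefix_nil, reduceCtorEq, false_and, and_false,
        true_and, Bool.true_eq_false, List.nil_prefix, List.cons_ne_nil] at hab
    · simp_all
    · exact (hA a ‹a ∈ A›).2.1 b ‹b ∈ A› hab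
    · exact (hB a (by tauto)).2.1 b (by tauto) hab
  · split_ifs with hax haA
    · simpa [hax] using hx
    · exact weight_le false (hA a haA).2.2
    · exact weight_le true (hB a (by tauto)).2.2

theorem exists_subset_two_mul_sum_le [DecidableEq α] (w : α → ℕ) {M : ℕ} {s : Finset α} {x : α}
    (hx : ∀ y ∈ s, w y ≤ w x) (hs : ∑ y ∈ s, w y + w x ≤ M) :
    ∃ A ⊆ s, 2 * ∑ y ∈ A, w y ≤ M ∧ 2 * ∑ y ∈ s \ A, w y ≤ M := by
  obtain ⟨A, hA⟩ := Finset.exists_maximal (s := s.powerset.filter fun A => 2 * ∑ y ∈ A, w y ≤ M)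
    ⟨∅, by simp⟩
  obtain ⟨hAs, hAM⟩ : A ⊆ s ∧ 2 * ∑ y ∈ A, w y ≤ M := by simpa using hA.prop
  refine ⟨A, hAs, hAM, ?_⟩
  rcases (s \ A).eq_empty_or_nonempty with hempty | ⟨y, hy⟩
  · simp [hempty]
  -- by maximality `A ∪ {y}` overshoots `M / 2`, so the remainder is below `M / 2` since `w y ≤ w x`
  obtain ⟨hys, hyA⟩ := Finset.mem_sdiff.mp hy
  have hover : M < 2 * (w y + ∑ z ∈ A, w z) := by
    by_contra! hle
    have := hA.2 (y := insert y A)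
      (by simp [Finset.insert_subset hys hAs, Finset.sum_insert hyA, hle]) (Finset.subset_insert y A)
    exact hyA (this (Finset.mem_insert_self y A))
  have := Finset.sum_sdiff (f := w) hAs
  have := hx y hys
  omega

theorem exists_isWeightBalancedCode (w : α → ℕ) (s : Finset α) :
    ∀ M, ∑ a ∈ s, w a ≤ M → ∃ γ, IsWeightBalancedCode w M s γ := by
  classical
  induction s using Finset.strongInduction with
  | H s ih =>
  intro M hs
  rcases s.eq_empty_or_nonempty with rfl | hne
  · exact ⟨fun _ => [], by simp [IsWeightBalancedCode]⟩
  obtain ⟨x, hxs, hxmax⟩ := s.exists_max_image w hne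
  have hsum := Finset.sum_erase_add s w hxs
  obtain ⟨A, hA, hAM, hBM⟩ := exists_subset_two_mul_sum_le w (M := M) (s := s.erase x) (x := x)
    (fun y hy => hxmax y (Finset.mem_of_mem_erase hy)) (by omega)
  have herase : s.erase x ⊂ s := Finset.erase_ssubset hxs
  obtain ⟨γA, hγA⟩ := ih A (lt_of_le_of_lt hA herase) (M / 2) (by omega)
  obtain ⟨γB, hγB⟩ :=
    ih (s.erase x \ A) (lt_of_le_of_lt Finset.sdiff_subset herase) (M / 2) (by omega)
  have hx : w x ≤ M := le_trans (Finset.single_le_sum (fun _ _ => Nat.zero_le _) hxs) hs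
  have hs_eq : insert x (A ∪ (s.erase x \ A)) = s := by
    rw [Finset.union_sdiff_of_subset hA, Finset.insert_erase hxs]
  exact ⟨_, hs_eq ▸ hγA.insert_union hγB hx⟩

end WeightBalancedCode

section RootedTree

variable (T : FRTree V)

theorem FRTree.iterate_parent_root (k : ℕ) : T.parent^[k] T.root = T.root :=
  Function.iterate_fixed T.root_fixed k

theorem FRTree.eq_root_of_parent_eq_self {v : V} (h : T.parent v = v) : v = T.root := by
  obtain ⟨k, hk⟩ := T.reaches v
  rwa [Function.iterate_fixed h] at hk

theorem frNodeDepth_eq_zero_iff {v : V} : frNodeDepth T v = 0 ↔ v = T.root := by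
  simp [frNodeDepth]

theorem frNodeDepth_parent {v : V} (hv : v ≠ T.root) :
    frNodeDepth T v = frNodeDepth T (T.parent v) + 1 := by
  obtain ⟨n, hn⟩ := Nat.exists_eq_succ_of_ne_zero (mt (frNodeDepth_eq_zero_iff T).mp hv)
  have hspec : T.parent^[n] (T.parent v) = T.root := by
    rw [← Function.iterate_succ_apply, ← hn]
    exact Nat.find_spec (T.reaches v)
  have hmin : ∀ m < n, T.parent^[m] (T.parent v) ≠ T.root := fun m hm => by
    rw [← Function.iterate_succ_apply]
    exact Nat.find_min (T.reaches v) (show m + 1 < frNodeDepth T v by omega)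
  rw [hn, show frNodeDepth T (T.parent v) = n from (Nat.find_eq_iff _).mpr ⟨hspec, hmin⟩]

theorem FRTree.parent_induction {P : V → Prop} (root : P T.root)
    (step : ∀ v, v ≠ T.root → P (T.parent v) → P v) (v : V) : P v := by
  induction hd : frNodeDepth T v using Nat.strong_induction_on generalizing v with
  | _ n ih =>
  by_cases hv : v = T.root
  · exact hv ▸ root
  · exact step v hv (ih _ (by rw [← hd, frNodeDepth_parent T hv]; omega) _ rfl)

theorem frAncestor_refl (v : V) : frAncestor T v v := ⟨0, rfl⟩

theorem frAncestor_parent (v : V) : frAncestor T (T.parent v) v := ⟨1, rfl⟩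

theorem frAncestor_trans {u v w : V} (huv : frAncestor T u v) (hvw : frAncestor T v w) :
    frAncestor T u w := by
  obtain ⟨k, rfl⟩ := huv
  obtain ⟨l, rfl⟩ := hvw
  exact ⟨k + l, Function.iterate_add_apply _ _ _ _⟩

theorem frAncestor_parent_of_ne {u v : V} (h : frAncestor T u v) (hne : u ≠ v) :
    frAncestor T u (T.parent v) := by
  obtain ⟨_ | k, hk⟩ := h
  · exact absurd hk.symm hne
  · exact ⟨k, hk⟩

theorem eq_root_of_frAncestor_root {u : V} (h : frAncestor T u T.root) : u = T.root := by
  obtain ⟨k, hk⟩ := h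
  rw [← hk, T.iterate_parent_root]

theorem frNodeDepth_parent_le (v : V) : frNodeDepth T (T.parent v) ≤ frNodeDepth T v := by
  by_cases hv : v = T.root
  · simp [hv, T.root_fixed]
  · rw [frNodeDepth_parent T hv]; omega

theorem frNodeDepth_le_of_frAncestor {u v : V} (h : frAncestor T u v) :
    frNodeDepth T u ≤ frNodeDepth T v := by
  obtain ⟨k, rfl⟩ := h
  induction k with
  | zero => rfl
  | succ k ih =>
    rw [Function.iterate_succ_apply']
    exact (frNodeDepth_parent_le T _).trans ih

theorem frNodeDepth_lt_of_frAncestor {u v : V} (h : frAncestor T u v) (hne : u ≠ v) :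
    frNodeDepth T u < frNodeDepth T v := by
  have hv : v ≠ T.root := fun hv => hne (hv ▸ eq_root_of_frAncestor_root T (hv ▸ h))
  have := frNodeDepth_le_of_frAncestor T (frAncestor_parent_of_ne T h hne)
  rw [frNodeDepth_parent T hv]
  omega

theorem frAncestor_antisymm {u v : V} (huv : frAncestor T u v) (hvu : frAncestor T v u) :
    u = v := by
  by_contra hne
  have := frNodeDepth_lt_of_frAncestor T huv hne
  have := frNodeDepth_lt_of_frAncestor T hvu (Ne.symm hne)
  omega

theorem frAncestor_total {a b u : V} (ha : frAncestor T a u) (hb : frAncestor T b u) :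
    frAncestor T a b ∨ frAncestor T b a := by
  obtain ⟨k, rfl⟩ := ha
  obtain ⟨l, rfl⟩ := hb
  rcases le_total k l with h | h
  · exact Or.inr ⟨l - k, by rw [← Function.iterate_add_apply, Nat.sub_add_cancel h]⟩
  · exact Or.inl ⟨k - l, by rw [← Function.iterate_add_apply, Nat.sub_add_cancel h]⟩

theorem eq_of_frAncestor_of_frNodeDepth_eq {a b u : V} (ha : frAncestor T a u)
    (hb : frAncestor T b u) (hd : frNodeDepth T a = frNodeDepth T b) : a = b := by
  by_contra hne
  rcases frAncestor_total T ha hb with hab | hba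
  · exact absurd hd (frNodeDepth_lt_of_frAncestor T hab hne).ne
  · exact absurd hd.symm (frNodeDepth_lt_of_frAncestor T hba (Ne.symm hne)).ne

theorem mem_frChildren {c p : V} : c ∈ frChildren T p ↔ T.parent c = p ∧ c ≠ p := by
  simp [frChildren]

theorem mem_frChildren_parent {v : V} (hv : v ≠ T.root) : v ∈ frChildren T (T.parent v) :=
  (mem_frChildren T).mpr ⟨rfl, fun h => hv (T.eq_root_of_parent_eq_self h.symm)⟩

theorem ne_root_of_mem_frChildren {c p : V} (h : c ∈ frChildren T p) : c ≠ T.root := by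
  rintro rfl
  obtain ⟨hp, hne⟩ := (mem_frChildren T).mp h
  exact hne (hp ▸ T.root_fixed.symm)

theorem frNodeDepth_of_mem_frChildren {c p : V} (h : c ∈ frChildren T p) :
    frNodeDepth T c = frNodeDepth T p + 1 := by
  rw [frNodeDepth_parent T (ne_root_of_mem_frChildren T h), ((mem_frChildren T).mp h).1]

theorem exists_mem_frChildren_frAncestor {p u : V} (h : frAncestor T p u) (hne : p ≠ u) :
    ∃ c ∈ frChildren T p, frAncestor T c u := by
  induction u using T.parent_induction with
  | root => exact absurd (eq_root_of_frAncestor_root T h) hne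
  | step u hu ih =>
    by_cases hpu : p = T.parent u
    · exact ⟨u, hpu ▸ mem_frChildren_parent T hu, frAncestor_refl T u⟩
    · obtain ⟨c, hc, hcu⟩ := ih (frAncestor_parent_of_ne T h hne) hpu
      exact ⟨c, hc, frAncestor_trans T hcu (frAncestor_parent T u)⟩

theorem frIsLeaf_iff_forall_frAncestor {v : V} :
    frIsLeaf T v ↔ ∀ u, frAncestor T v u → u = v := by
  refine ⟨fun hv u ↦ ?_, fun hv u hu ↦ hv u (hu ▸ frAncestor_parent T u)⟩
  rintro ⟨k, hk⟩
  induction k generalizing u with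
  | zero => exact hk
  | succ k ih => exact hv u (ih (T.parent u) hk)

end RootedTree

theorem iterate_dropLast {α : Type*} (l : List α) (k : ℕ) :
    List.dropLast^[k] l = l.take (l.length - k) := by
  induction k with
  | zero => simp
  | succ k ih =>
    rw [Function.iterate_succ_apply', ih, List.dropLast_eq_take, List.length_take, List.take_take]
    congr 1
    omega

section PrefixTrie

variable {ι : Type*} [Fintype ι] (f : ι → List Bool)

def prefixNodes : Finset (List Bool) :=
  Finset.univ.biUnion fun i => (f i).inits.toFinset

theorem mem_prefixNodes {p : List Bool} : p ∈ prefixNodes f ↔ ∃ i, p <+: f i := by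
  simp [prefixNodes]

theorem dropLast_mem_prefixNodes {p : List Bool} (hp : p ∈ prefixNodes f) :
    p.dropLast ∈ prefixNodes f := by
  obtain ⟨i, hi⟩ := (mem_prefixNodes f).mp hp
  exact (mem_prefixNodes f).mpr ⟨i, (List.dropLast_prefix p).trans hi⟩

def prefixParent (p : prefixNodes f) : prefixNodes f :=
  ⟨p.1.dropLast, dropLast_mem_prefixNodes f p.2⟩

theorem coe_iterate_prefixParent (p : prefixNodes f) (k : ℕ) :
    ((prefixParent f)^[k] p : List Bool) = (p : List Bool).take (p.1.length - k) := by
  rw [← iterate_dropLast]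
  exact Function.Semiconj.iterate_right (f := Subtype.val) (fun _ => rfl) k p

variable [Nonempty ι]

def prefixTrie : FRTree (prefixNodes f) where
  root := ⟨[], (mem_prefixNodes f).mpr ⟨Classical.arbitrary ι, List.nil_prefix⟩⟩
  parent := prefixParent f
  root_fixed := rfl
  reaches p := ⟨p.1.length, Subtype.ext (by simp [coe_iterate_prefixParent])⟩

theorem coe_iterate_parent_prefixTrie (p : prefixNodes f) (k : ℕ) :
    ((prefixTrie f).parent^[k] p : List Bool) = (p : List Bool).take (p.1.length - k) :=
  coe_iterate_prefixParent f p k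

theorem frAncestor_prefixTrie_iff {p q : prefixNodes f} :
    frAncestor (prefixTrie f) p q ↔ p.1 <+: q.1 := by
  constructor
  · rintro ⟨k, rfl⟩
    rw [coe_iterate_parent_prefixTrie]
    exact List.take_prefix _ _
  · rintro ⟨t, ht⟩
    refine ⟨q.1.length - p.1.length, Subtype.ext ?_⟩
    rw [coe_iterate_parent_prefixTrie, ← ht]
    simp

theorem frNodeDepth_prefixTrie (p : prefixNodes f) :
    frNodeDepth (prefixTrie f) p = p.1.length := by
  refine (Nat.find_eq_iff _).mpr ⟨?_, fun n hn => ?_⟩ <;>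
    rw [Subtype.ext_iff, coe_iterate_parent_prefixTrie]
  · simp [prefixTrie]
  · simp only [prefixTrie, List.take_eq_nil_iff, not_or]
    exact ⟨by omega, List.ne_nil_of_length_pos (by omega)⟩

theorem card_frChildren_prefixTrie_le (p : prefixNodes f) :
    (frChildren (prefixTrie f) p).card ≤ 2 := by
  have hchild {q : prefixNodes f} (hq : q ∈ frChildren (prefixTrie f) p) :
      q.1 = p.1 ++ [q.1.getLastD false] := by
    obtain ⟨hqp, hne⟩ := (mem_frChildren _).mp hq
    have hp : q.1.dropLast = p.1 := congrArg Subtype.val hqp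
    have hq_nil : q.1 ≠ [] := fun h => hne (Subtype.ext (by rw [← hp, h]; rfl))
    rw [← hp, List.getLastD_eq_getLast?, List.getLast?_eq_some_getLast hq_nil, Option.getD_some,
      List.dropLast_append_getLast]
  calc (frChildren (prefixTrie f) p).card ≤ (Finset.univ : Finset Bool).card :=
        Finset.card_le_card_of_injOn (fun q => q.1.getLastD false) (fun _ _ => Finset.mem_univ _)
          fun q₁ hq₁ q₂ hq₂ h => Subtype.ext <| by
            rw [hchild hq₁, hchild hq₂]
            exact congrArg (fun b => p.1 ++ [b]) h
    _ = 2 := rfl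

theorem frIsLeaf_prefixTrie_iff (p : prefixNodes f) :
    frIsLeaf (prefixTrie f) p ↔ ∀ i, p.1 <+: f i → f i = p.1 := by
  constructor
  · intro hleaf i ⟨s, ht⟩
    by_contra hne
    obtain ⟨b, t, rfl⟩ := List.exists_cons_of_ne_nil (l := s)
      (fun h => hne (by rw [← ht, h, List.append_nil]))
    have hq : p.1 ++ [b] ∈ prefixNodes f := (mem_prefixNodes f).mpr ⟨i, ⟨t, by rw [← ht]; simp⟩⟩
    have := congrArg (fun q : prefixNodes f => q.1.length)
      (hleaf ⟨p.1 ++ [b], hq⟩ (Subtype.ext (List.dropLast_concat ..)))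
    simp at this
  · intro hmax q hqp
    have hp : q.1.dropLast = p.1 := congrArg Subtype.val hqp
    obtain ⟨i, hi⟩ := (mem_prefixNodes f).mp q.2
    have hfi := hmax i (hp ▸ (List.dropLast_prefix q.1).trans hi)
    have hdrop : q.1.dropLast = q.1 :=
      (List.dropLast_prefix q.1).eq_of_length (le_antisymm (List.dropLast_prefix q.1).length_le
        (by rw [hp, ← hfi]; exact hi.length_le))
    exact Subtype.ext (hdrop.symm.trans hp)

theorem frDepth_prefixTrie : frDepth (prefixTrie f) = Finset.univ.sup fun i => (f i).length := by
  refine le_antisymm (Finset.sup_le fun p _ => ?_) (Finset.sup_le fun i _ => ?_)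
  · obtain ⟨i, hi⟩ := (mem_prefixNodes f).mp p.2
    rw [frNodeDepth_prefixTrie]
    exact hi.length_le.trans (Finset.le_sup (f := fun i => (f i).length) (Finset.mem_univ i))
  · have hi : f i ∈ prefixNodes f := (mem_prefixNodes f).mpr ⟨i, List.prefix_rfl⟩
    rw [← frNodeDepth_prefixTrie f ⟨f i, hi⟩]
    exact Finset.le_sup (Finset.mem_univ _)

end PrefixTrie

section MapEquiv

variable {A B : Type} [Fintype A] [DecidableEq A] [Fintype B] [DecidableEq B]

def FRTree.mapEquiv (e : A ≃ B) (S : FRTree A) : FRTree B where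
  root := e S.root
  parent b := e (S.parent (e.symm b))
  root_fixed := by simp [S.root_fixed]
  reaches b := by
    obtain ⟨k, hk⟩ := S.reaches (e.symm b)
    refine ⟨k, ?_⟩
    rw [← e.apply_symm_apply b, ← Function.Semiconj.iterate_right (f := e) (ga := S.parent)
      (gb := fun b => e (S.parent (e.symm b))) (fun a => by simp) k (e.symm b), hk]

variable (e : A ≃ B) (S : FRTree A)

theorem FRTree.iterate_parent_mapEquiv (k : ℕ) (a : A) :
    (S.mapEquiv e).parent^[k] (e a) = e (S.parent^[k] a) :=
  (Function.Semiconj.iterate_right (f := e) (fun a => by simp [mapEquiv]) k a).symm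

theorem frAncestor_mapEquiv_iff {a a' : A} :
    frAncestor (S.mapEquiv e) (e a) (e a') ↔ frAncestor S a a' := by
  simp [frAncestor, FRTree.iterate_parent_mapEquiv]

theorem frNodeDepth_mapEquiv (a : A) : frNodeDepth (S.mapEquiv e) (e a) = frNodeDepth S a :=
  Nat.find_congr' fun {n} => by
    change (S.mapEquiv e).parent^[n] (e a) = e S.root ↔ _
    rw [FRTree.iterate_parent_mapEquiv, e.apply_eq_iff_eq]

theorem frDepth_mapEquiv : frDepth (S.mapEquiv e) = frDepth S := by
  rw [frDepth, ← Finset.map_univ_equiv e, Finset.sup_map]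
  exact congrArg _ (funext (frNodeDepth_mapEquiv e S))

theorem frIsLeaf_mapEquiv_iff {a : A} : frIsLeaf (S.mapEquiv e) (e a) ↔ frIsLeaf S a := by
  simp only [frIsLeaf, FRTree.mapEquiv]
  refine ⟨fun h u hu => by simpa using h (e u) (by simp [hu]), fun h b hb => ?_⟩
  rw [← h (e.symm b) (by simpa using hb), e.apply_symm_apply]

theorem frChildren_mapEquiv (a : A) :
    frChildren (S.mapEquiv e) (e a) = (frChildren S a).map e.toEmbedding := by
  ext b
  obtain ⟨a', rfl⟩ := e.surjective b
  simp [mem_frChildren, FRTree.mapEquiv]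

end MapEquiv

section SubtreeSize

variable (T : FRTree V)

open scoped Classical in
noncomputable def frDescendants (v : V) : Finset V :=
  Finset.univ.filter (frAncestor T v)

theorem mem_frDescendants {u v : V} : u ∈ frDescendants T v ↔ frAncestor T v u := by
  simp [frDescendants]

noncomputable def frSubtreeSize (v : V) : ℕ :=
  (frDescendants T v).card

theorem frSubtreeSize_pos (v : V) : 0 < frSubtreeSize T v :=
  Finset.card_pos.mpr ⟨v, (mem_frDescendants T).mpr (frAncestor_refl T v)⟩

theorem sum_frSubtreeSize_frChildren_lt (p : V) :
    ∑ c ∈ frChildren T p, frSubtreeSize T c < frSubtreeSize T p := by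
  have hparent {c : V} (hc : c ∈ frChildren T p) : frAncestor T p c :=
    ((mem_frChildren T).mp hc).1 ▸ frAncestor_parent T c
  have hdisj : (frChildren T p : Set V).PairwiseDisjoint (frDescendants T) := by
    intro c₁ hc₁ c₂ hc₂ hne
    refine Finset.disjoint_left.mpr fun u hu₁ hu₂ => hne ?_
    refine eq_of_frAncestor_of_frNodeDepth_eq T ((mem_frDescendants T).mp hu₁)
      ((mem_frDescendants T).mp hu₂) ?_
    rw [frNodeDepth_of_mem_frChildren T hc₁, frNodeDepth_of_mem_frChildren T hc₂]
  simp only [frSubtreeSize]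
  rw [← Finset.card_biUnion hdisj]
  refine Finset.card_lt_card ((Finset.ssubset_iff_of_subset ?_).mpr ⟨p, ?_, ?_⟩)
  · refine Finset.biUnion_subset.mpr fun c hc u hu => ?_
    rw [mem_frDescendants] at hu ⊢
    exact frAncestor_trans T (hparent hc) hu
  · exact (mem_frDescendants T).mpr (frAncestor_refl T p)
  · simp only [Finset.mem_biUnion, mem_frDescendants, not_exists, not_and]
    exact fun c hc hcp => ((mem_frChildren T).mp hc).2 (frAncestor_antisymm T hcp (hparent hc))

end SubtreeSize

section PathCode

variable (T : FRTree V)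

theorem exists_childCode (p : V) :
    ∃ γ, IsWeightBalancedCode (frSubtreeSize T) (frSubtreeSize T p - 1) (frChildren T p) γ :=
  exists_isWeightBalancedCode _ _ _ (Nat.le_sub_one_of_lt (sum_frSubtreeSize_frChildren_lt T p))

noncomputable def childCode (p : V) : V → List Bool :=
  (exists_childCode T p).choose

theorem isWeightBalancedCode_childCode (p : V) :
    IsWeightBalancedCode (frSubtreeSize T) (frSubtreeSize T p - 1) (frChildren T p)
      (childCode T p) :=
  (exists_childCode T p).choose_spec

noncomputable def pathCode (v : V) : List Bool :=
  if hv : v = T.root then [] else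
    have := frNodeDepth_parent T hv
    pathCode (T.parent v) ++ childCode T (T.parent v) v
termination_by frNodeDepth T v

theorem pathCode_root : pathCode T T.root = [] := by
  rw [pathCode, dif_pos rfl]

theorem pathCode_of_ne_root {v : V} (hv : v ≠ T.root) :
    pathCode T v = pathCode T (T.parent v) ++ childCode T (T.parent v) v := by
  rw [pathCode, dif_neg hv]

theorem pathCode_of_mem_frChildren {c p : V} (hc : c ∈ frChildren T p) :
    pathCode T c = pathCode T p ++ childCode T p c := by
  rw [pathCode_of_ne_root T (ne_root_of_mem_frChildren T hc), ((mem_frChildren T).mp hc).1]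

theorem childCode_ne_nil {c p : V} (hc : c ∈ frChildren T p) : childCode T p c ≠ [] :=
  (isWeightBalancedCode_childCode T p c hc).1

theorem pathCode_prefix_of_frAncestor {u v : V} (h : frAncestor T u v) :
    pathCode T u <+: pathCode T v := by
  induction v using T.parent_induction with
  | root => rw [eq_root_of_frAncestor_root T h]
  | step v hv ih =>
    by_cases huv : u = v
    · rw [huv]
    · rw [pathCode_of_ne_root T hv]
      exact (ih (frAncestor_parent_of_ne T h huv)).trans (List.prefix_append _ _)

theorem frAncestor_of_pathCode_prefix {u v : V} (h : pathCode T u <+: pathCode T v) :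
    frAncestor T u v := by
  induction u using T.parent_induction generalizing v with
  | root => exact T.reaches v
  | step u hu ih =>
    set p := T.parent u
    have hup : u ∈ frChildren T p := mem_frChildren_parent T hu
    rw [pathCode_of_mem_frChildren T hup] at h
    have hpv : frAncestor T p v := ih ((List.prefix_append _ _).trans h)
    by_cases hpv_eq : p = v
    · have hlen := h.length_le
      have := List.length_pos_iff.mpr (childCode_ne_nil T hup)
      rw [List.length_append, ← hpv_eq] at hlen
      omega
    -- `v` lies below a child `c` of `p`; the two child codes are comparable, so `c = u`
    obtain ⟨c, hc, hcv⟩ := exists_mem_frChildren_frAncestor T hpv hpv_eq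
    have hcode := pathCode_of_mem_frChildren T hc ▸ pathCode_prefix_of_frAncestor T hcv
    have hγ := isWeightBalancedCode_childCode T p
    rcases List.prefix_or_prefix_of_prefix h hcode with hpre | hpre <;>
      rw [List.prefix_append_right_inj] at hpre
    · exact (hγ u hup).2.1 c hc hpre ▸ hcv
    · exact (hγ c hc).2.1 u hup hpre ▸ hcv

theorem pathCode_prefix_iff {u v : V} : pathCode T u <+: pathCode T v ↔ frAncestor T u v :=
  ⟨frAncestor_of_pathCode_prefix T, pathCode_prefix_of_frAncestor T⟩

theorem pathCode_injective : Function.Injective (pathCode T) := by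
  intro u v h
  exact frAncestor_antisymm T ((pathCode_prefix_iff T).mp (h ▸ List.prefix_rfl))
    ((pathCode_prefix_iff T).mp (h ▸ List.prefix_rfl))

theorem exists_length_pathCode_le (v : V) :
    ∃ f, (pathCode T v).length ≤ frNodeDepth T v + 2 * f ∧
      frSubtreeSize T v * 2 ^ f ≤ Fintype.card V := by
  induction v using T.parent_induction with
  | root =>
    exact ⟨0, by simp [pathCode_root], by simpa [frSubtreeSize] using Finset.card_le_univ _⟩
  | step v hv ih =>
    obtain ⟨f, hlen, hsize⟩ := ih
    have hweight := (isWeightBalancedCode_childCode T _ v (mem_frChildren_parent T hv)).2.2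
    have hcode := pathCode_of_ne_root T hv
    have hdepth := frNodeDepth_parent T hv
    set γ := childCode T (T.parent v) v
    refine ⟨γ.length / 2 + f, ?_, ?_⟩
    · rw [hcode, List.length_append, hdepth]
      omega
    · calc frSubtreeSize T v * 2 ^ (γ.length / 2 + f)
          = frSubtreeSize T v * 2 ^ (γ.length / 2) * 2 ^ f := by rw [pow_add, mul_assoc]
        _ ≤ frSubtreeSize T (T.parent v) * 2 ^ f := by gcongr; omega
        _ ≤ Fintype.card V := hsize

theorem length_pathCode_le_logb (v : V) :
    ((pathCode T v).length : ℝ) ≤ frDepth T + 2 * Real.logb 2 (Fintype.card V) := by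
  obtain ⟨f, hlen, hsize⟩ := exists_length_pathCode_le T v
  have hf : f ≤ Nat.log 2 (Fintype.card V) :=
    Nat.le_log_of_pow_le one_lt_two
      ((Nat.le_mul_of_pos_left _ (frSubtreeSize_pos T v)).trans hsize)
  have hlen' : (pathCode T v).length ≤ frDepth T + 2 * Nat.log 2 (Fintype.card V) :=
    hlen.trans (add_le_add (Finset.le_sup (Finset.mem_univ v)) (by omega))
  calc ((pathCode T v).length : ℝ) ≤ frDepth T + 2 * (Nat.log 2 (Fintype.card V) : ℝ) := by
        exact_mod_cast hlen'
    _ ≤ frDepth T + 2 * Real.logb 2 (Fintype.card V) := by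
        gcongr
        exact_mod_cast Real.natLog_le_logb (Fintype.card V) 2

theorem exists_frIsLeaf_pathCode_eq_iff {p : List Bool} (hp : ∃ u, p <+: pathCode T u) :
    (∀ u, p <+: pathCode T u → pathCode T u = p) ↔ ∃ v, frIsLeaf T v ∧ pathCode T v = p := by
  constructor
  · intro hmax
    obtain ⟨v, hv⟩ := hp
    refine ⟨v, (frIsLeaf_iff_forall_frAncestor T).mpr fun u hvu => ?_, hmax v hv⟩
    exact pathCode_injective T
      ((hmax u (hv.trans (pathCode_prefix_of_frAncestor T hvu))).trans (hmax v hv).symm)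
  · rintro ⟨v, hv, rfl⟩ u hvu
    rw [(frIsLeaf_iff_forall_frAncestor T).mp hv u ((pathCode_prefix_iff T).mp hvu)]

end PathCode

/-- Any rooted tree `T` with `n` nodes can be transformed into a binary tree `T'`
(every node has at most two frChildren) whose leaves are exactly the (images of the)
leaves of `T`, such that two original nodes are in frAncestor–descendant relation in `T'`
iff they are in that relation in `T`, and `depth(T') ≤ 2·(depth(T) + log₂ n)`. -/
theorem stmt2 (T : FRTree V) :
    ∃ (m : ℕ) (T' : FRTree (Fin m)) (ι : V ↪ Fin m),
      (∀ w : Fin m, (frChildren T' w).card ≤ 2) ∧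
      (∀ w : Fin m, frIsLeaf T' w ↔ ∃ v : V, frIsLeaf T v ∧ ι v = w) ∧
      (∀ u v : V, frAncestor T u v ↔ frAncestor T' (ι u) (ι v)) ∧
      (frDepth T' : ℝ) ≤ 2 * ((frDepth T : ℝ) + Real.logb 2 (Fintype.card V)) := by
  have : Nonempty V := ⟨T.root⟩
  let e := (prefixNodes (pathCode T)).equivFin
  let node (v : V) : prefixNodes (pathCode T) :=
    ⟨pathCode T v, (mem_prefixNodes _).mpr ⟨v, List.prefix_rfl⟩⟩
  have node_injective : Function.Injective node := fun u v h =>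
    pathCode_injective T (congrArg Subtype.val h)
  refine ⟨_, (prefixTrie (pathCode T)).mapEquiv e, ⟨e ∘ node, e.injective.comp node_injective⟩,
    fun w => ?_, fun w => ?_, fun u v => ?_, ?_⟩
  · obtain ⟨p, rfl⟩ := e.surjective w
    rw [frChildren_mapEquiv, Finset.card_map]
    exact card_frChildren_prefixTrie_le _ p
  · obtain ⟨p, rfl⟩ := e.surjective w
    rw [frIsLeaf_mapEquiv_iff, frIsLeaf_prefixTrie_iff,
      exists_frIsLeaf_pathCode_eq_iff T ((mem_prefixNodes _).mp p.2)]
    simp [node, Subtype.ext_iff]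
  · simp only [Function.Embedding.coeFn_mk, Function.comp_apply]
    rw [frAncestor_mapEquiv_iff, frAncestor_prefixTrie_iff, pathCode_prefix_iff]
  · obtain ⟨v, -, hv⟩ := Finset.exists_mem_eq_sup Finset.univ Finset.univ_nonempty
      fun v => (pathCode T v).length
    rw [frDepth_mapEquiv, frDepth_prefixTrie, hv]
    have hlen := length_pathCode_le_logb T v
    have hdepth : (0 : ℝ) ≤ frDepth T := Nat.cast_nonneg _
    linarith
end

section
/- Let P be a convex polygon with diameter realized by points v₁, v₂ ∈ P, and for z ∈ [0, diam(P)] let f(z) denote the length of the intersection of P with the line normal to v₁v₂ at distance z from v₁. Then area(P) ≥ (max_z f(z)) · diam(P) / 2. -/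
/-!
Let `u` be the unit vector along `v₁v₂` and `[a, c]` a longest chord of `P` orthogonal to `u`,
at height `z`. By convexity `P` contains the triangles `v₁ac` and `v₂ac`; they lie on opposite
sides of the chord and have areas `z |ac| / 2` and `(d - z) |ac| / 2`, where `d = |v₁v₂|`. In
orthonormal coordinates adapted to `u` each triangle is the region between two affine functions
over an interval, whose area is an integral.
-/

open MeasureTheory Real RealInnerProductSpace Set

theorem IsCompact.exists_dist_eq_diam {X : Type*} [PseudoMetricSpace X] {S : Set X}
    (hS : IsCompact S) (hne : S.Nonempty) :
    ∃ a ∈ S, ∃ b ∈ S, dist a b = Metric.diam S := by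
  obtain ⟨p, hp, hmax⟩ :=
    (hS.prod hS).exists_isMaxOn (hne.prod hne) continuous_dist.continuousOn
  refine ⟨p.1, hp.1, p.2, hp.2,
    le_antisymm (Metric.dist_le_diam_of_mem hS.isBounded hp.1 hp.2) ?_⟩
  exact Metric.diam_le_of_forall_dist_le dist_nonneg fun x hx y hy => hmax (mk_mem_prod hx hy)

theorem volume_regionBetween_Ico_eq {h y α β : ℝ} (hh : 0 ≤ h) (hαβ : α ≤ β) :
    volume (regionBetween (fun s => y + s / h * (α - y)) (fun s => y + s / h * (β - y))
      (Ico 0 h)) = ENNReal.ofReal (h * (β - α) / 2) := by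
  have hint : ∀ γ, IntegrableOn (fun s => y + s / h * (γ - y)) (Ico 0 h) :=
    fun γ => (Continuous.integrableOn_Icc (by fun_prop)).mono_set Ico_subset_Icc_self
  rw [Measure.volume_eq_prod, volume_regionBetween_eq_integral (hint α) (hint β)
    measurableSet_Ico fun s hs => by have := div_nonneg hs.1 hh; gcongr]
  congr 1
  rw [integral_Ico_eq_integral_Ioo, ← integral_Ioc_eq_integral_Ioo,
    ← intervalIntegral.integral_of_le hh]
  have hdiff : ((fun s => y + s / h * (β - y)) - fun s => y + s / h * (α - y)) =
      fun s => s / h * (β - α) := by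
    ext s
    simp only [Pi.sub_apply]
    ring
  rw [hdiff, intervalIntegral.integral_mul_const, intervalIntegral.integral_div, integral_id]
  rcases hh.eq_or_lt with rfl | hpos
  · simp
  · field_simp
    ring

theorem Convex.ofReal_mul_sub_div_two_le_volume_inter_Ico_prod {Q : Set (ℝ × ℝ)}
    (hQ : Convex ℝ Q) {h y α β : ℝ} (hh : 0 ≤ h) (hy : (0, y) ∈ Q) (hα : (h, α) ∈ Q)
    (hβ : (h, β) ∈ Q) (hαβ : α ≤ β) :
    ENNReal.ofReal (h * (β - α) / 2) ≤ volume (Q ∩ Ico 0 h ×ˢ univ) := by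
  rw [← volume_regionBetween_Ico_eq (y := y) hh hαβ]
  refine measure_mono ?_
  rintro ⟨s, t⟩ ⟨hs, ht⟩
  refine ⟨?_, hs, mem_univ t⟩
  have hl₀ : 0 ≤ s / h := div_nonneg hs.1 hh
  have hl₁ : s / h ≤ 1 := div_le_one_of_le₀ hs.2.le hh
  have hcone : ∀ γ, (h, γ) ∈ Q → (s, y + s / h * (γ - y)) ∈ Q := by
    intro γ hγ
    convert hQ hy hγ (sub_nonneg.2 hl₁) hl₀ (by ring) using 1
    ext
    · simp only [Prod.smul_mk, Prod.mk_add_mk, smul_eq_mul]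
      field_simp [(hs.1.trans_lt hs.2).ne']
      ring
    · simp only [Prod.smul_mk, Prod.mk_add_mk, smul_eq_mul]
      ring
  have hseg := hQ.segment_subset (hcone α hα) (hcone β hβ)
  rw [← Prod.image_mk_segment_right, segment_eq_Icc (by gcongr)] at hseg
  exact hseg ⟨t, Ioo_subset_Icc_self ht, rfl⟩

theorem OrthonormalBasis.exists_apply_eq {𝕜 E ι : Type*} [RCLike 𝕜] [NormedAddCommGroup E]
    [InnerProductSpace 𝕜 E] [FiniteDimensional 𝕜 E] [Fintype ι]
    (hcard : Module.finrank 𝕜 E = Fintype.card ι) (i : ι) {u : E} (hu : ‖u‖ = 1) :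
    ∃ b : OrthonormalBasis ι 𝕜 E, b i = u := by
  have hunit : Orthonormal 𝕜 (({i} : Set ι).domRestrict fun _ => u) :=
    ⟨fun _ => hu, fun j k hjk => absurd (Subsingleton.elim j k) hjk⟩
  obtain ⟨b, hb⟩ := hunit.exists_orthonormalBasis_extension_of_card_eq hcard
  exact ⟨b, hb i rfl⟩

section Plane

variable {E : Type*} [NormedAddCommGroup E] [InnerProductSpace ℝ E]

noncomputable def OrthonormalBasis.equivProd (b : OrthonormalBasis (Fin 2) ℝ E) :
    E ≃L[ℝ] ℝ × ℝ :=
  b.repr.toContinuousLinearEquiv.trans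
    ((EuclideanSpace.equiv (Fin 2) ℝ).trans (ContinuousLinearEquiv.finTwoArrow ℝ ℝ))

@[simp]
theorem OrthonormalBasis.equivProd_apply (b : OrthonormalBasis (Fin 2) ℝ E) (x : E) :
    b.equivProd x = (⟪b 0, x⟫, ⟪b 1, x⟫) := by
  simp [OrthonormalBasis.equivProd, b.repr_apply_apply]

variable [FiniteDimensional ℝ E] [MeasurableSpace E] [BorelSpace E]

theorem OrthonormalBasis.measurePreserving_equivProd (b : OrthonormalBasis (Fin 2) ℝ E) :
    MeasurePreserving b.equivProd.toHomeomorph.toMeasurableEquiv :=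
  (volume_preserving_finTwoArrow ℝ).comp
    ((EuclideanSpace.volume_preserving_symm_measurableEquiv_toLp _).comp
      b.measurePreserving_measurableEquiv)

theorem Convex.ofReal_mul_dist_div_two_le_volume_sep (hE : Module.finrank ℝ E = 2) {C : Set E}
    (hC : Convex ℝ C) {v u a c : E} {h : ℝ} (hv : v ∈ C) (hu : ‖u‖ = 1) (hh : 0 ≤ h)
    (ha : a ∈ C) (hc : c ∈ C) (hau : ⟪a - v, u⟫ = h) (hcu : ⟪c - v, u⟫ = h) :
    ENNReal.ofReal (h * dist a c / 2) ≤ volume {x ∈ C | ⟪x - v, u⟫ ∈ Ico 0 h} := by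
  obtain ⟨b, hb⟩ := OrthonormalBasis.exists_apply_eq (ι := Fin 2) (by simpa using hE) 0 hu
  wlog hac : ⟪b 1, a - v⟫ ≤ ⟪b 1, c - v⟫ generalizing a c
  · rw [dist_comm]
    exact this hc ha hcu hau (le_of_not_ge hac)
  set L := b.equivProd
  set Q : Set (ℝ × ℝ) := {p | v + L.symm p ∈ C}
  have hQ : Convex ℝ Q := (hC.translate_preimage_right v).linear_preimage L.symm.toLinearMap
  have hmemQ : ∀ x, L (x - v) ∈ Q ↔ x ∈ C := fun x => by simp [Q]
  have hcoord : ∀ x, L (x - v) = (⟪x - v, u⟫, ⟪b 1, x - v⟫) := fun x => by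
    rw [b.equivProd_apply, hb, real_inner_comm]
  have hdist : dist a c = ⟪b 1, c - v⟫ - ⟪b 1, a - v⟫ := by
    have h0 : ⟪b 0, a - c⟫ = 0 := by
      rw [hb, real_inner_comm, ← sub_sub_sub_cancel_right a c v, inner_sub_left, hau, hcu,
        sub_self]
    have h1 : ⟪b 1, a - c⟫ = ⟪b 1, a - v⟫ - ⟪b 1, c - v⟫ := by
      rw [← inner_sub_right, sub_sub_sub_cancel_right]
    have hsq := b.sum_sq_inner_right (a - c)
    rw [Fin.sum_univ_two, h0, h1, ← dist_eq_norm] at hsq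
    refine (sq_eq_sq₀ dist_nonneg (sub_nonneg.2 hac)).1 ?_
    linarith
  have hvol : volume {x ∈ C | ⟪x - v, u⟫ ∈ Ico 0 h} = volume (Q ∩ Ico 0 h ×ˢ univ) := by
    have hΨ : MeasurePreserving
        ((MeasurableEquiv.subRight v).trans L.toHomeomorph.toMeasurableEquiv) :=
      b.measurePreserving_equivProd.comp (measurePreserving_sub_right volume v)
    rw [← hΨ.measure_preimage_equiv]
    congr 1
    ext x
    change _ ↔ L (x - v) ∈ Q ∩ Ico 0 h ×ˢ univ
    rw [mem_inter_iff, hmemQ, mem_prod, hcoord]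
    simp only [mem_univ, and_true]
    rfl
  rw [hvol, hdist]
  refine hQ.ofReal_mul_sub_div_two_le_volume_inter_Ico_prod (y := 0) hh ?_ ?_ ?_ hac
  · simpa [hcoord, Prod.zero_eq_mk] using (hmemQ v).2 hv
  · simpa [hcoord, hau] using (hmemQ a).2 ha
  · simpa [hcoord, hcu] using (hmemQ c).2 hc

theorem Convex.ofReal_inner_mul_dist_div_two_le_volume (hE : Module.finrank ℝ E = 2)
    {C : Set E} (hC : Convex ℝ C) (hCm : MeasurableSet C) {v w u a c : E} (hv : v ∈ C)
    (hw : w ∈ C) (hu : ‖u‖ = 1) (ha : a ∈ C) (hc : c ∈ C)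
    (hac : ⟪a - v, u⟫ = ⟪c - v, u⟫)
    (hva : 0 ≤ ⟪a - v, u⟫) (haw : ⟪a - v, u⟫ ≤ ⟪w - v, u⟫) :
    ENNReal.ofReal (⟪w - v, u⟫ * dist a c / 2) ≤ volume C := by
  set h := ⟪a - v, u⟫
  have hflip : ∀ x, ⟪x - w, -u⟫ = ⟪w - v, u⟫ - ⟪x - v, u⟫ := fun x => by
    rw [inner_neg_right, ← sub_sub_sub_cancel_right x w v, inner_sub_left]
    ring
  have hnear := hC.ofReal_mul_dist_div_two_le_volume_sep hE hv hu hva ha hc rfl hac.symm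
  have hfar := hC.ofReal_mul_dist_div_two_le_volume_sep hE hw ((norm_neg u).trans hu)
    (sub_nonneg.2 haw) ha hc (hflip a) (by rw [hflip, hac])
  have hdisj : Disjoint {x ∈ C | ⟪x - v, u⟫ ∈ Ico 0 h}
      {x ∈ C | ⟪x - w, -u⟫ ∈ Ico 0 (⟪w - v, u⟫ - h)} := by
    refine Set.disjoint_left.2 fun x hx hx' => ?_
    have := hx'.2.2
    rw [hflip] at this
    linarith [hx.2.2]
  have hmeas : MeasurableSet {x ∈ C | ⟪x - w, -u⟫ ∈ Ico 0 (⟪w - v, u⟫ - h)} :=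
    hCm.inter (measurableSet_Ico.preimage (by fun_prop))
  calc ENNReal.ofReal (⟪w - v, u⟫ * dist a c / 2)
      = ENNReal.ofReal (h * dist a c / 2) +
          ENNReal.ofReal ((⟪w - v, u⟫ - h) * dist a c / 2) := by
        rw [← ENNReal.ofReal_add (div_nonneg (mul_nonneg hva dist_nonneg) zero_le_two)
          (div_nonneg (mul_nonneg (sub_nonneg.2 haw) dist_nonneg) zero_le_two)]
        congr 1
        ring
    _ ≤ volume {x ∈ C | ⟪x - v, u⟫ ∈ Ico 0 h} +
          volume {x ∈ C | ⟪x - w, -u⟫ ∈ Ico 0 (⟪w - v, u⟫ - h)} := add_le_add hnear hfar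
    _ = volume ({x ∈ C | ⟪x - v, u⟫ ∈ Ico 0 h} ∪
          {x ∈ C | ⟪x - w, -u⟫ ∈ Ico 0 (⟪w - v, u⟫ - h)}) :=
        (measure_union hdisj hmeas).symm
    _ ≤ volume C := measure_mono (union_subset (sep_subset _ _) (sep_subset _ _))

end Plane

theorem stmt10_general (P : Set (EuclideanSpace ℝ (Fin 2)))
    (hconv : Convex ℝ P) (hcomp : IsCompact P)
    (v₁ v₂ : EuclideanSpace ℝ (Fin 2)) (h₁ : v₁ ∈ P) (h₂ : v₂ ∈ P)
    (hdiam : dist v₁ v₂ = Metric.diam P)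
    (f : ℝ → ℝ)
    (hf : ∀ z, f z =
      Metric.diam {x | x ∈ P ∧ ⟪x - v₁, (dist v₁ v₂)⁻¹ • (v₂ - v₁)⟫ = z}) :
    ∀ z ∈ Set.Icc 0 (Metric.diam P),
      f z * Metric.diam P / 2 ≤ (volume P).toReal := by
  intro z hz
  rw [← hdiam] at hz ⊢
  rcases (dist_nonneg : 0 ≤ dist v₁ v₂).eq_or_lt with hd | hd
  · rw [← hd, mul_zero, zero_div]
    exact ENNReal.toReal_nonneg
  set u := (dist v₁ v₂)⁻¹ • (v₂ - v₁)
  have hu : ‖u‖ = 1 := by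
    rw [norm_smul, ← dist_eq_norm', norm_inv, norm_of_nonneg hd.le, inv_mul_cancel₀ hd.ne']
  have hvu : ⟪v₂ - v₁, u⟫ = dist v₁ v₂ := by
    rw [real_inner_smul_right, real_inner_self_eq_norm_sq, ← dist_eq_norm']
    field_simp
  set S := {x | x ∈ P ∧ ⟪x - v₁, u⟫ = z}
  rw [show f z = Metric.diam S from hf z]
  rcases S.eq_empty_or_nonempty with hS | hS
  · rw [hS, Metric.diam_empty, zero_mul, zero_div]
    exact ENNReal.toReal_nonneg
  obtain ⟨a, ⟨haP, haz⟩, c, ⟨hcP, hcz⟩, hac⟩ :=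
    (hcomp.inter_right (isClosed_eq (by fun_prop) continuous_const)).exists_dist_eq_diam hS
  have hvol := hconv.ofReal_inner_mul_dist_div_two_le_volume finrank_euclideanSpace_fin
    hcomp.isClosed.measurableSet h₁ h₂ hu haP hcP (haz.trans hcz.symm) (haz ▸ hz.1)
    (by rw [haz, hvu]; exact hz.2)
  rw [hvu, hac, mul_comm] at hvol
  exact (ENNReal.ofReal_le_iff_le_toReal hcomp.measure_lt_top.ne).1 hvol

/-- Let `P ⊂ ℝ²` be a compact convex polygonal region whose diameter is realized by
`v₁, v₂ ∈ P`, and for `z` let `f z` be the length of the intersection of `P` with the line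
normal to `v₁v₂` at (signed) distance `z` from `v₁` (a segment, so its length is its
diameter). Then `area(P) ≥ f z · diam(P) / 2` for every `z ∈ [0, diam(P)]`. -/
theorem stmt10 (P : Set (EuclideanSpace ℝ (Fin 2)))
    (hconv : Convex ℝ P) (hcomp : IsCompact P)
    (v₁ v₂ : EuclideanSpace ℝ (Fin 2)) (h₁ : v₁ ∈ P) (h₂ : v₂ ∈ P) (hne : v₁ ≠ v₂)
    (hdiam : dist v₁ v₂ = Metric.diam P)
    (f : ℝ → ℝ)
    (hf : ∀ z, f z =
      Metric.diam {x | x ∈ P ∧ ⟪x - v₁, (dist v₁ v₂)⁻¹ • (v₂ - v₁)⟫ = z}) :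
    ∀ z ∈ Set.Icc 0 (Metric.diam P),
      f z * Metric.diam P / 2 ≤ (volume P).toReal :=
  stmt10_general P hconv hcomp v₁ v₂ h₁ h₂ hdiam f hf
end

section
/- Let 0 < ε < 1/3, and let R ⊂ ℝᵈ be an axis-parallel hyperrectangle with rectangular aspect ratio at most 1/ε. Let w₁, ..., w_k be positive reals with Σᵢ wᵢ = (1-ε)·vol(R). Then there exist pairwise disjoint axis-parallel hyperrectangles R₁, ..., R_k, each contained in R, such that vol(Rᵢ) = wᵢ and the rectangular aspect ratio of each Rᵢ is at most 1/ε. -/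
/-
Call a box `ε`-balanced if each side is at least `ε` times every other side; for `d > 0` this
means aspect ratio at most `1/ε`. We show by strong induction on the set of weights that they can
be packed into any balanced box `R` as soon as `∑ w ≤ (1 - ε) vol R`.

First shrink `R` homothetically to a balanced box `R₀` with `(1 - ε) vol R₀ = W := ∑ w`.
Cutting `R₀` across its longest side at a fraction `θ ∈ [ε, 1 - ε]` of it yields two balanced
boxes of volumes `θ vol R₀` and `(1 - θ) vol R₀`. If some `w j > (1 - ε) W`, cut off a piece of
volume exactly `w j` and pack the other weights into the rest, which keeps the slack. Otherwise
split the weights into two groups each of total in `[ε W, (1 - ε) W]` (greedily, using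
`3 ε ≤ 1`), cut `R₀` in the same proportion, and pack each group into its piece.
-/

/-- An axis-parallel hyperrectangle in `ℝ^d`, given by its lower and upper corners. -/
structure Box (d : ℕ) where
  lo : Fin d → ℝ
  hi : Fin d → ℝ
  lo_lt_hi : ∀ i, lo i < hi i

namespace Box

variable {d : ℕ}

/-- The side length of a box in direction `i`. -/
def side (B : Box d) (i : Fin d) : ℝ := B.hi i - B.lo i

/-- The volume of a box. -/
def vol (B : Box d) : ℝ := ∏ i, B.side i

/-- The box as a subset of `ℝ^d`. -/
def toSet (B : Box d) : Set (Fin d → ℝ) :=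
  Set.univ.pi fun i => Set.Icc (B.lo i) (B.hi i)

/-- The (open) interior of a box. -/
def interiorSet (B : Box d) : Set (Fin d → ℝ) :=
  Set.univ.pi fun i => Set.Ioo (B.lo i) (B.hi i)

/-- The rectangular aspect ratio of a box: longest side over shortest side. -/
noncomputable def ratio (B : Box d) : ℝ := (⨆ i, B.side i) / (⨅ i, B.side i)

end Box

lemma Finset.exists_subset_sum_mem_Icc {ι : Type*} {s : Finset ι} {w : ι → ℝ}
    (hw : ∀ i ∈ s, 0 < w i) {ε : ℝ} (hε : ε ≤ 1 / 3)
    (hmax : ∀ i ∈ s, w i ≤ (1 - ε) * ∑ j ∈ s, w j) :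
    ∃ A ⊆ s, ∑ i ∈ A, w i ∈ Set.Icc (ε * ∑ i ∈ s, w i) ((1 - ε) * ∑ i ∈ s, w i) := by
  classical
  set W := ∑ i ∈ s, w i
  have hW : 0 ≤ W := Finset.sum_nonneg fun i hi => (hw i hi).le
  by_cases hbig : ∃ i ∈ s, ε * W ≤ w i
  · obtain ⟨i, hi, hwi⟩ := hbig
    exact ⟨{i}, Finset.singleton_subset_iff.mpr hi, by simpa using ⟨hwi, hmax i hi⟩⟩
  push Not at hbig
  -- a subset of least total among those of total `≥ ε W` overshoots by less than one weight
  obtain ⟨A, hA, hmin⟩ := Finset.exists_min_image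
    (s.powerset.filter fun A => ε * W ≤ ∑ i ∈ A, w i) (fun A => ∑ i ∈ A, w i)
    ⟨s, Finset.mem_filter.mpr ⟨Finset.mem_powerset_self s, by nlinarith⟩⟩
  obtain ⟨hAs, hεA⟩ := Finset.mem_filter.mp hA
  rw [Finset.mem_powerset] at hAs
  refine ⟨A, hAs, hεA, ?_⟩
  obtain rfl | ⟨a, ha⟩ := A.eq_empty_or_nonempty
  · simp only [Finset.sum_empty]; nlinarith
  have herase : ∑ i ∈ A.erase a, w i < ε * W := by
    by_contra! h
    have := hmin (A.erase a) (Finset.mem_filter.mpr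
      ⟨Finset.mem_powerset.mpr ((A.erase_subset a).trans hAs), h⟩)
    linarith [Finset.sum_erase_add A w ha, hw a (hAs ha)]
  nlinarith [Finset.sum_erase_add A w ha, hbig a (hAs ha)]

namespace Box

variable {d : ℕ}

lemma side_pos (B : Box d) (i : Fin d) : 0 < B.side i := sub_pos.mpr (B.lo_lt_hi i)

lemma vol_pos (B : Box d) : 0 < B.vol := Finset.prod_pos fun i _ => B.side_pos i

lemma toSet_subset_toSet_iff {A B : Box d} :
    A.toSet ⊆ B.toSet ↔ ∀ i, B.lo i ≤ A.lo i ∧ A.hi i ≤ B.hi i := by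
  have hne : ¬∃ i, Set.Icc (A.lo i) (A.hi i) = ∅ := fun ⟨i, hi⟩ =>
    (Set.nonempty_Icc.mpr (A.lo_lt_hi i).le).ne_empty hi
  simp only [toSet, Set.univ_pi_subset_univ_pi_iff, hne, or_false,
    Set.Icc_subset_Icc_iff (A.lo_lt_hi _).le]

lemma interiorSet_mono {A B : Box d} (h : A.toSet ⊆ B.toSet) :
    A.interiorSet ⊆ B.interiorSet :=
  Set.pi_mono fun i _ =>
    Set.Ioo_subset_Ioo (toSet_subset_toSet_iff.mp h i).1 (toSet_subset_toSet_iff.mp h i).2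

def IsBalanced (ε : ℝ) (B : Box d) : Prop := ∀ i j, ε * B.side i ≤ B.side j

lemma ratio_le_one_div_iff (hd : 0 < d) {ε : ℝ} (hε : 0 < ε) (B : Box d) :
    B.ratio ≤ 1 / ε ↔ B.IsBalanced ε := by
  have : Nonempty (Fin d) := ⟨⟨0, hd⟩⟩
  obtain ⟨m, hm⟩ := exists_eq_ciInf_of_finite (f := B.side)
  have hbdd : BddAbove (Set.range B.side) := (Set.finite_range _).bddAbove
  rw [ratio, ← hm, div_le_iff₀ (B.side_pos m), ciSup_le_iff hbdd]
  refine ⟨fun h i j => ?_, fun h i => ?_⟩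
  · calc ε * B.side i ≤ ε * (1 / ε * B.side m) := by gcongr; exact h i
      _ = B.side m := by field_simp
      _ ≤ B.side j := hm ▸ ciInf_le (Set.finite_range _).bddBelow j
  · rw [div_mul_eq_mul_div, one_mul, le_div_iff₀ hε, mul_comm]
    exact h i m

lemma isBalanced_of_forall_side_mem_Icc {ε M : ℝ} (hε : 0 ≤ ε) {B : Box d}
    (h : ∀ i, B.side i ∈ Set.Icc (ε * M) M) : B.IsBalanced ε := fun i j =>
  (mul_le_mul_of_nonneg_left (h i).2 hε).trans (h j).1

lemma vol_eq_of_side_eq_update {B B' : Box d} {i : Fin d} {c : ℝ}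
    (h : ∀ j, B'.side j = Function.update B.side i (c * B.side i) j) :
    B'.vol = c * B.vol := by
  rw [vol, vol, Finset.prod_congr rfl fun j _ => h j,
    Finset.prod_update_of_mem (Finset.mem_univ i), ← Finset.mul_prod_erase _ _ (Finset.mem_univ i),
    Finset.sdiff_singleton_eq_erase, mul_assoc]

def homothety (B : Box d) (l : ℝ) (hl : 0 < l) : Box d where
  lo := B.lo
  hi i := B.lo i + l * B.side i
  lo_lt_hi i := lt_add_of_pos_right _ (mul_pos hl (B.side_pos i))

lemma side_homothety (B : Box d) {l : ℝ} (hl : 0 < l) (i : Fin d) :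
    (B.homothety l hl).side i = l * B.side i := by
  simp [homothety, side]

lemma vol_homothety (B : Box d) {l : ℝ} (hl : 0 < l) :
    (B.homothety l hl).vol = l ^ d * B.vol := by
  simp only [vol, side_homothety, Finset.prod_mul_distrib, Finset.prod_const, Finset.card_univ,
    Fintype.card_fin]

lemma homothety_subset (B : Box d) {l : ℝ} (hl : 0 < l) (hl1 : l ≤ 1) :
    (B.homothety l hl).toSet ⊆ B.toSet :=
  toSet_subset_toSet_iff.mpr fun i => ⟨le_rfl, by
    have := mul_le_of_le_one_left (B.side_pos i).le hl1
    simp only [homothety, side] at this ⊢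
    linarith⟩

lemma IsBalanced.homothety {ε : ℝ} {B : Box d} (hB : B.IsBalanced ε) {l : ℝ} (hl : 0 < l) :
    (B.homothety l hl).IsBalanced ε := fun i j => by
  simp only [side_homothety, mul_left_comm ε]
  exact mul_le_mul_of_nonneg_left (hB i j) hl.le

lemma exists_isBalanced_subset_vol_eq (hd : 0 < d) {ε : ℝ} {B : Box d} (hB : B.IsBalanced ε)
    {v : ℝ} (hv : 0 < v) (hvB : v ≤ B.vol) :
    ∃ B' : Box d, B'.toSet ⊆ B.toSet ∧ B'.IsBalanced ε ∧ B'.vol = v := by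
  have hq : 0 < v / B.vol := div_pos hv B.vol_pos
  have hl : 0 < (v / B.vol) ^ (d⁻¹ : ℝ) := Real.rpow_pos_of_pos hq _
  refine ⟨B.homothety _ hl, B.homothety_subset hl ?_, hB.homothety hl, ?_⟩
  · exact Real.rpow_le_one hq.le ((div_le_one B.vol_pos).mpr hvB) (by positivity)
  · rw [vol_homothety, Real.rpow_inv_natCast_pow hq.le hd.ne', div_mul_cancel₀ _ B.vol_pos.ne']

def lowerSlab (B : Box d) (i : Fin d) {θ : ℝ} (hθ : 0 < θ) : Box d where
  lo := B.lo
  hi := Function.update B.hi i (B.lo i + θ * B.side i)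
  lo_lt_hi j := by
    rcases eq_or_ne j i with rfl | h
    · simpa using mul_pos hθ (B.side_pos j)
    · simpa [h] using B.lo_lt_hi j

def upperSlab (B : Box d) (i : Fin d) {θ : ℝ} (hθ : θ < 1) : Box d where
  lo := Function.update B.lo i (B.lo i + θ * B.side i)
  hi := B.hi
  lo_lt_hi j := by
    rcases eq_or_ne j i with rfl | h
    · have := mul_lt_of_lt_one_left (B.side_pos j) hθ
      simp only [Function.update_self, side] at this ⊢
      linarith
    · simpa [h] using B.lo_lt_hi j

section Slab

variable (B : Box d) (i : Fin d) {θ : ℝ}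

lemma side_lowerSlab (hθ : 0 < θ) (j : Fin d) :
    (B.lowerSlab i hθ).side j = Function.update B.side i (θ * B.side i) j := by
  rcases eq_or_ne j i with rfl | h
  · simp [lowerSlab, side]
  · simp [lowerSlab, side, h]

lemma side_upperSlab (hθ : θ < 1) (j : Fin d) :
    (B.upperSlab i hθ).side j = Function.update B.side i ((1 - θ) * B.side i) j := by
  rcases eq_or_ne j i with rfl | h
  · simp only [upperSlab, side, Function.update_self]; ring
  · simp [upperSlab, side, h]

lemma lowerSlab_subset (hθ : 0 < θ) (hθ1 : θ ≤ 1) : (B.lowerSlab i hθ).toSet ⊆ B.toSet := by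
  refine toSet_subset_toSet_iff.mpr fun j => ⟨le_rfl, ?_⟩
  rcases eq_or_ne j i with rfl | h
  · have := mul_le_of_le_one_left (B.side_pos j).le hθ1
    simp only [lowerSlab, Function.update_self, side] at this ⊢
    linarith
  · simp [lowerSlab, h]

lemma upperSlab_subset (hθ0 : 0 ≤ θ) (hθ : θ < 1) : (B.upperSlab i hθ).toSet ⊆ B.toSet := by
  refine toSet_subset_toSet_iff.mpr fun j => ⟨?_, le_rfl⟩
  rcases eq_or_ne j i with rfl | h
  · simpa [upperSlab] using mul_nonneg hθ0 (B.side_pos j).le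
  · simp [upperSlab, h]

lemma disjoint_lowerSlab_upperSlab (hθ0 : 0 < θ) (hθ1 : θ < 1) :
    Disjoint (B.lowerSlab i hθ0).interiorSet (B.upperSlab i hθ1).interiorSet :=
  Set.disjoint_left.mpr fun x hP hQ => by
    have hP := (Set.mem_univ_pi.mp hP i).2
    have hQ := (Set.mem_univ_pi.mp hQ i).1
    simp only [lowerSlab, upperSlab, Function.update_self] at hP hQ
    linarith

end Slab

lemma IsBalanced.exists_split (hd : 0 < d) {ε θ : ℝ} (hε : 0 < ε) (hεθ : ε ≤ θ)
    (hθε : θ ≤ 1 - ε) {B : Box d} (hB : B.IsBalanced ε) :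
    ∃ P Q : Box d, P.toSet ⊆ B.toSet ∧ Q.toSet ⊆ B.toSet ∧
      Disjoint P.interiorSet Q.interiorSet ∧ P.IsBalanced ε ∧ Q.IsBalanced ε ∧
      P.vol = θ * B.vol ∧ Q.vol = (1 - θ) * B.vol := by
  have : Nonempty (Fin d) := ⟨⟨0, hd⟩⟩
  obtain ⟨i, hi⟩ := Finite.exists_max B.side
  have hθ0 : 0 < θ := hε.trans_le hεθ
  have hθ1 : θ < 1 := by linarith
  -- cutting across the longest side keeps every side in `[ε * B.side i, B.side i]`
  have hsides : ∀ c, ε ≤ c → c ≤ 1 → ∀ j,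
      Function.update B.side i (c * B.side i) j ∈ Set.Icc (ε * B.side i) (B.side i) := by
    intro c hc hc1 j
    rcases eq_or_ne j i with rfl | h
    · rw [Function.update_self]
      exact ⟨by gcongr; exact (B.side_pos j).le, mul_le_of_le_one_left (B.side_pos j).le hc1⟩
    · rw [Function.update_of_ne h]
      exact ⟨hB i j, hi j⟩
  refine ⟨B.lowerSlab i hθ0, B.upperSlab i hθ1, B.lowerSlab_subset i hθ0 hθ1.le,
    B.upperSlab_subset i hθ0.le hθ1, B.disjoint_lowerSlab_upperSlab i hθ0 hθ1,
    isBalanced_of_forall_side_mem_Icc (M := B.side i) hε.le fun j => ?_,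
    isBalanced_of_forall_side_mem_Icc (M := B.side i) hε.le fun j => ?_,
    vol_eq_of_side_eq_update (B.side_lowerSlab i hθ0),
    vol_eq_of_side_eq_update (B.side_upperSlab i hθ1)⟩
  · exact B.side_lowerSlab i hθ0 j ▸ hsides θ hεθ hθ1.le j
  · exact B.side_upperSlab i hθ1 j ▸ hsides (1 - θ) (by linarith) (by linarith) j

variable {ι : Type*}

section Packing

structure IsPacking (ε : ℝ) (R : Box d) (s : Finset ι) (w : ι → ℝ) (B : ι → Box d) : Prop where
  subset : ∀ i ∈ s, (B i).toSet ⊆ R.toSet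
  vol_eq : ∀ i ∈ s, (B i).vol = w i
  isBalanced : ∀ i ∈ s, (B i).IsBalanced ε
  pairwise_disjoint : (s : Set ι).Pairwise fun i j => Disjoint (B i).interiorSet (B j).interiorSet

variable {ε : ℝ} {R : Box d} {s : Finset ι} {w : ι → ℝ} {B : ι → Box d}

lemma isPacking_empty : IsPacking ε R ∅ w B :=
  ⟨by simp, by simp, by simp, by simp⟩

lemma isPacking_singleton {P : Box d} {j : ι} (hP : P.IsBalanced ε) (hvol : P.vol = w j) :
    IsPacking ε P {j} w fun _ => P :=
  ⟨fun _ _ => subset_rfl, fun i hi => Finset.mem_singleton.mp hi ▸ hvol, fun _ _ => hP,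
    by simp⟩

lemma IsPacking.mono {R' : Box d} (h : IsPacking ε R s w B) (hR : R.toSet ⊆ R'.toSet) :
    IsPacking ε R' s w B :=
  ⟨fun i hi => (h.subset i hi).trans hR, h.vol_eq, h.isBalanced, h.pairwise_disjoint⟩

lemma IsPacking.union [DecidableEq ι] {P Q : Box d} {A C : Finset ι} {B₁ B₂ : ι → Box d}
    (hP : P.toSet ⊆ R.toSet) (hQ : Q.toSet ⊆ R.toSet) (hPQ : Disjoint P.interiorSet Q.interiorSet)
    (h₁ : IsPacking ε P A w B₁) (h₂ : IsPacking ε Q C w B₂) :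
    IsPacking ε R (A ∪ C) w (A.piecewise B₁ B₂) := by
  have hmem : ∀ i ∈ A ∪ C, i ∉ A → i ∈ C := fun i hi hiA =>
    (Finset.mem_union.mp hi).resolve_left hiA
  refine ⟨fun i hi => ?_, fun i hi => ?_, fun i hi => ?_, fun i hi j hj hij => ?_⟩
  · by_cases hiA : i ∈ A
    · simpa [hiA] using (h₁.subset i hiA).trans hP
    · simpa [hiA] using (h₂.subset i (hmem i hi hiA)).trans hQ
  · by_cases hiA : i ∈ A
    · simpa [hiA] using h₁.vol_eq i hiA
    · simpa [hiA] using h₂.vol_eq i (hmem i hi hiA)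
  · by_cases hiA : i ∈ A
    · simpa [hiA] using h₁.isBalanced i hiA
    · simpa [hiA] using h₂.isBalanced i (hmem i hi hiA)
  · by_cases hiA : i ∈ A <;> by_cases hjA : j ∈ A
    · simpa [hiA, hjA] using h₁.pairwise_disjoint hiA hjA hij
    · simpa [hiA, hjA] using hPQ.mono (interiorSet_mono (h₁.subset i hiA))
        (interiorSet_mono (h₂.subset j (hmem j hj hjA)))
    · simpa [hiA, hjA] using hPQ.symm.mono (interiorSet_mono (h₂.subset i (hmem i hi hiA)))
        (interiorSet_mono (h₁.subset j hjA))
    · simpa [hiA, hjA] using h₂.pairwise_disjoint (hmem i hi hiA) (hmem j hj hjA) hij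

end Packing

theorem IsBalanced.exists_isPacking (hd : 0 < d) {ε : ℝ} (hε0 : 0 < ε) (hε1 : ε < 1 / 3)
    (s : Finset ι) {R : Box d} (hR : R.IsBalanced ε) {w : ι → ℝ} (hw : ∀ i ∈ s, 0 < w i)
    (hsum : ∑ i ∈ s, w i ≤ (1 - ε) * R.vol) :
    ∃ B : ι → Box d, IsPacking ε R s w B := by
  classical
  induction s using Finset.strongInduction generalizing R with
  | H s IH =>
  obtain rfl | hs := s.eq_empty_or_nonempty
  · exact ⟨fun _ => R, isPacking_empty⟩
  set W := ∑ i ∈ s, w i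
  have hW : 0 < W := Finset.sum_pos hw hs
  have h1ε : 0 < 1 - ε := by linarith
  obtain ⟨R₀, hR₀R, hR₀, hR₀vol⟩ := exists_isBalanced_subset_vol_eq hd hR (v := W / (1 - ε))
    (by positivity) (by rwa [div_le_iff₀' h1ε])
  have hV : 0 < R₀.vol := R₀.vol_pos
  replace hR₀vol : (1 - ε) * R₀.vol = W := by rw [hR₀vol]; field_simp
  suffices ∃ B, IsPacking ε R₀ s w B from this.imp fun B hB => hB.mono hR₀R
  by_cases hbig : ∃ j ∈ s, (1 - ε) * W < w j
  · obtain ⟨j, hj, hwj⟩ := hbig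
    have hwjW : w j ≤ W := Finset.single_le_sum (fun i hi => (hw i hi).le) hj
    -- cut off a piece of volume exactly `w j`; it is thick enough as `(1 - ε) ^ 2 ≥ ε`
    obtain ⟨P, Q, hP, hQ, hPQ, hPb, hQb, hPvol, hQvol⟩ := hR₀.exists_split hd hε0
      (θ := w j / R₀.vol) (by rw [le_div_iff₀ hV]; nlinarith) (by rw [div_le_iff₀ hV]; linarith)
    rw [div_mul_cancel₀ _ hV.ne'] at hPvol
    have hrest : ∑ i ∈ s.erase j, w i ≤ (1 - ε) * Q.vol := by
      rw [hQvol, one_sub_mul (w j / R₀.vol), div_mul_cancel₀ _ hV.ne']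
      nlinarith [Finset.sum_erase_add s w hj, mul_pos hε0 (hw j hj)]
    obtain ⟨B, hB⟩ := IH (s.erase j) (Finset.erase_ssubset hj) hQb
      (fun i hi => hw i (Finset.mem_of_mem_erase hi)) hrest
    rw [← Finset.insert_erase hj, Finset.insert_eq]
    exact ⟨_, (isPacking_singleton hPb hPvol).union hP hQ hPQ hB⟩
  · push Not at hbig
    obtain ⟨A, hAs, hAlo, hAhi⟩ := Finset.exists_subset_sum_mem_Icc hw hε1.le hbig
    set a := ∑ i ∈ A, w i
    have ha : 0 < a := lt_of_lt_of_le (by positivity) hAlo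
    have hAs' : A ⊂ s := Finset.ssubset_iff_subset_ne.mpr ⟨hAs, by rintro rfl; nlinarith⟩
    obtain ⟨P, Q, hP, hQ, hPQ, hPb, hQb, hPvol, hQvol⟩ := hR₀.exists_split hd hε0
      (θ := a / W) (by rwa [le_div_iff₀ hW]) (by rwa [div_le_iff₀ hW])
    obtain ⟨B₁, hB₁⟩ := IH A hAs' hPb (fun i hi => hw i (hAs hi)) (by
      rw [hPvol, mul_left_comm, hR₀vol, div_mul_cancel₀ _ hW.ne'])
    obtain ⟨B₂, hB₂⟩ := IH (s \ A) (Finset.sdiff_ssubset hAs (Finset.nonempty_of_sum_ne_zero ha.ne'))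
      hQb (fun i hi => hw i (Finset.sdiff_subset hi)) (by
        rw [hQvol, mul_left_comm, hR₀vol, sub_mul, div_mul_cancel₀ _ hW.ne', one_mul]
        linarith [Finset.sum_sdiff hAs (f := w)])
    rw [← Finset.union_sdiff_of_subset hAs]
    exact ⟨_, hB₁.union hP hQ hPQ hB₂⟩

end Box

theorem stmt11_general (d : ℕ) (hd : 0 < d) (ε : ℝ) (hε0 : 0 < ε) (hε1 : ε < 1/3)
    (R : Box d) (hR : R.ratio ≤ 1/ε)
    (k : ℕ) (w : Fin k → ℝ) (hw : ∀ i, 0 < w i)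
    (hsum : ∑ i, w i = (1 - ε) * R.vol) :
    ∃ B : Fin k → Box d,
      (∀ i, (B i).toSet ⊆ R.toSet) ∧
      (∀ i, (B i).vol = w i) ∧
      (∀ i, (B i).ratio ≤ 1/ε) ∧
      (∀ i j, i ≠ j → Disjoint ((B i).interiorSet) ((B j).interiorSet)) := by
  obtain ⟨B, hB⟩ := ((R.ratio_le_one_div_iff hd hε0).mp hR).exists_isPacking hd hε0 hε1
    Finset.univ (fun i _ => hw i) hsum.le
  refine ⟨B, fun i => hB.subset i (Finset.mem_univ i), fun i => hB.vol_eq i (Finset.mem_univ i),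
    fun i => ((B i).ratio_le_one_div_iff hd hε0).mpr (hB.isBalanced i (Finset.mem_univ i)),
    fun i j hij => hB.pairwise_disjoint (Finset.mem_univ i) (Finset.mem_univ j) hij⟩

/-- Slack-cut lemma: let `0 < ε < 1/3`, and let `R ⊂ ℝ^d` be a hyperrectangle with
rectangular aspect ratio at most `1/ε`. Let `w₁, …, w_k` be positive reals summing to
`(1-ε)·vol(R)`. Then there exist hyperrectangles `R₁, …, R_k` with pairwise disjoint
interiors, each contained in `R`, with `vol(Rᵢ) = wᵢ` and rectangular aspect ratio
at most `1/ε`. -/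
theorem stmt11 (d : ℕ) (hd : 0 < d) (ε : ℝ) (hε0 : 0 < ε) (hε1 : ε < 1/3)
    (R : Box d) (hR : R.ratio ≤ 1/ε)
    (k : ℕ) (hk : 0 < k) (w : Fin k → ℝ) (hw : ∀ i, 0 < w i)
    (hsum : ∑ i, w i = (1 - ε) * R.vol) :
    ∃ B : Fin k → Box d,
      (∀ i, (B i).toSet ⊆ R.toSet) ∧
      (∀ i, (B i).vol = w i) ∧
      (∀ i, (B i).ratio ≤ 1/ε) ∧
      (∀ i j, i ≠ j → Disjoint ((B i).interiorSet) ((B j).interiorSet)) :=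
  stmt11_general d hd ε hε0 hε1 R hR k w hw hsum
end
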